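/- arXiv:1210.6952 — 5 statements merged into one kernel-verified Lean document; each statement's English description precedes it below -/
import Mathlib

section
/- Let (a_n)_{n≥1} be a sequence of real numbers such that c := limsup_{n→∞} a_n/n < +∞. Then there is a sequence (b_n)_{n≥1} of positive real numbers with lim_{n→∞} b_n/b_{n+1} = 1 such that the series Σ_{n=1}^{∞} b_n exp(a_n − ns) converges for every s > c and diverges (equals +∞) for every s ≤ c. -/
open MeasureTheory Filter Set Topology ENNReal NNReal

noncomputable section

/-- Birkhoff sum `S_n(φ) = ∑_{j=0}^{n-1} φ ∘ f^j`. -/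
def Sn (f φ : ℝ → ℝ) (n : ℕ) (x : ℝ) : ℝ := ∑ j ∈ Finset.range n, φ (f^[j] x)

/-- Entropy of the join, along the orbit up to time `n`, of the finite measurable
partition of the space induced by a map `P` into `Fin k`. -/
def partEntropy {Y : Type*} [MeasurableSpace Y] (ν : Measure Y) (T : Y → Y)
    {k : ℕ} (P : Y → Fin k) (n : ℕ) : ℝ :=
  ∑ s : Fin n → Fin k,
    Real.negMulLog ((ν {y | ∀ i : Fin n, P (T^[(i : ℕ)] y) = s i}).toReal)

/-- Measure-theoretic (Kolmogorov–Sinai) entropy `h_ν(T)`. -/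
def ksEntropy {Y : Type*} [MeasurableSpace Y] (ν : Measure Y) (T : Y → Y) : ℝ :=
  ⨆ k : ℕ, ⨆ P : {P : Y → Fin k // Measurable P},
    Filter.liminf (fun n : ℕ => partEntropy ν T P.1 n / n) atTop

/-- `ν` is invariant by `T`. -/
def InvariantMeas {Y : Type*} [MeasurableSpace Y] (T : Y → Y) (ν : Measure Y) : Prop :=
  ∀ A : Set Y, MeasurableSet A → ν (T ⁻¹' A) = ν A

/-- Topological pressure of `f|_X` for the potential `φ`, defined by the variational
principle over invariant Borel probability measures carried by `X`. -/
def pres (f : ℝ → ℝ) (X : Set ℝ) (φ : ℝ → ℝ) : ℝ :=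
  sSup { r : ℝ | ∃ ν : Measure ℝ, IsProbabilityMeasure ν ∧ InvariantMeas f ν ∧ ν X = 1 ∧
    r = ksEntropy ν f + ∫ x in X, φ x ∂ν }

/-- Topological pressure of a continuous self-map of a compact metric space,
defined by the variational principle. -/
def presGen {Y : Type*} [MeasurableSpace Y] (T : Y → Y) (φ : Y → ℝ) : ℝ :=
  sSup { r : ℝ | ∃ ν : Measure Y, IsProbabilityMeasure ν ∧ InvariantMeas T ν ∧
    r = ksEntropy ν T + ∫ y, φ y ∂ν }

/-- `ν` is an equilibrium state of `f|_X` for the potential `φ`. -/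
def IsEquilibriumState (f : ℝ → ℝ) (X : Set ℝ) (φ : ℝ → ℝ) (ν : Measure ℝ) : Prop :=
  IsProbabilityMeasure ν ∧ InvariantMeas f ν ∧ ν X = 1 ∧
    ksEntropy ν f + ∫ x in X, φ x ∂ν = pres f X φ

/-- The Julia set of `f : I → I`: the complement in `I` of the largest open set on which
the family of iterates of `f` is normal (equicontinuous). -/
def juliaSet (f : ℝ → ℝ) (I : Set ℝ) : Set ℝ :=
  I \ ⋃₀ {U : Set ℝ | IsOpen U ∧ EquicontinuousOn (fun n : ℕ => f^[n]) (U ∩ I)}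

/-- `f : I → I` is a multimodal interval map. -/
structure IsMultimodal (f : ℝ → ℝ) (I : Set ℝ) : Prop where
  interval : ∃ a b : ℝ, a ≤ b ∧ I = Icc a b
  mapsTo : MapsTo f I I
  contOn : ContinuousOn f I
  not_injOn : ¬ InjOn f I
  piecewise : ∃ (n : ℕ) (P : Fin n → Set ℝ), (∀ i, (P i).OrdConnected) ∧
    Pairwise (Function.onFun Disjoint P) ∧ (⋃ i, P i) = I ∧ ∀ i, InjOn f (P i)

/-- The class `𝒜` of interval maps. -/
structure InClassA (f : ℝ → ℝ) (I : Set ℝ) : Prop extends IsMultimodal f I where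
  differentiable : ∀ x ∈ I, DifferentiableAt ℝ f x
  deriv_holder : ∃ β ∈ Ioc (0:ℝ) 1, ∃ C : ℝ, 0 ≤ C ∧
    ∀ x ∈ I, ∀ y ∈ I, |deriv f x - deriv f y| ≤ C * |x - y| ^ β
  crit_finite : {x | x ∈ I ∧ deriv f x = 0}.Finite
  julia_nontrivial : ∃ x ∈ juliaSet f I, ∃ y ∈ juliaSet f I, x ≠ y
  julia_inv : I ∩ f ⁻¹' juliaSet f I = juliaSet f I

/-- `φ` is Hölder continuous of exponent `α` on `X`. -/
def HolderOnSet (φ : ℝ → ℝ) (X : Set ℝ) (α : ℝ) : Prop :=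
  ∃ C : ℝ, 0 ≤ C ∧ ∀ x ∈ X, ∀ y ∈ X, |φ x - φ y| ≤ C * |x - y| ^ α

/-- `φ` is Hölder continuous on `X` (for some exponent `α ∈ (0,1]`). -/
def HolderCont (φ : ℝ → ℝ) (X : Set ℝ) : Prop :=
  ∃ α ∈ Ioc (0:ℝ) 1, HolderOnSet φ X α

/-- A complex-valued function Hölder continuous of exponent `α` on `X`. -/
def HolderOnSetC (ψ : ℝ → ℂ) (X : Set ℝ) (α : ℝ) : Prop :=
  ∃ C : ℝ, 0 ≤ C ∧ ∀ x ∈ X, ∀ y ∈ X, ‖ψ x - ψ y‖ ≤ C * |x - y| ^ α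

/-- The potential `φ` is hyperbolic for `f` on `X`:
for some `n ≥ 1`, `sup_X (1/n) S_n(φ) < P(f|_X, φ)`. -/
def IsHyperbolicPotential (f φ : ℝ → ℝ) (X : Set ℝ) : Prop :=
  ∃ n : ℕ, 0 < n ∧ sSup ((fun x => Sn f φ n x / n) '' X) < pres f X φ

/-- `f` is topologically exact on `X`. -/
def TopExactOn (f : ℝ → ℝ) (X : Set ℝ) : Prop :=
  ∀ U : Set ℝ, IsOpen U → (U ∩ X).Nonempty → ∃ n : ℕ, 0 < n ∧ f^[n] '' (U ∩ X) = X

/-- `μ` is a `g`-conformal measure for `f` on `X`: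
`μ(f(A)) = ∫_A g dμ` for every Borel `A ⊆ X` on which `f` is injective. -/
def IsConformal (f : ℝ → ℝ) (X : Set ℝ) (g : ℝ → ℝ) (μ : Measure ℝ) : Prop :=
  ∀ A : Set ℝ, MeasurableSet A → A ⊆ X → InjOn f A →
    μ (f '' A) = ∫⁻ x in A, ENNReal.ofReal (g x) ∂μ

/-- Topological support of a measure on `ℝ`. -/
def measSupport (μ : Measure ℝ) : Set ℝ := {x | ∀ ε > 0, 0 < μ (Metric.ball x ε)}

/-- The transfer (Ruelle–Perron–Frobenius) operator `L_φ` acting on real functions. -/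
def transfer (f φ : ℝ → ℝ) (X : Set ℝ) (ψ : ℝ → ℝ) (x : ℝ) : ℝ :=
  ∑ᶠ y ∈ X ∩ f ⁻¹' {x}, Real.exp (φ y) * ψ y

/-- The transfer operator `L_φ` acting on complex functions. -/
def transferC (f φ : ℝ → ℝ) (X : Set ℝ) (ψ : ℝ → ℂ) (x : ℝ) : ℂ :=
  ∑ᶠ y ∈ X ∩ f ⁻¹' {x}, (Real.exp (φ y) : ℂ) * ψ y

/-- The normalized transfer operator `L̂_φ = exp(-P(f,φ)) L_φ`. -/
def transferHat (f φ : ℝ → ℝ) (X : Set ℝ) : (ℝ → ℝ) → ℝ → ℝ :=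
  fun ψ x => Real.exp (-(pres f X φ)) * transfer f φ X ψ x

/-- Keller's pseudo-distance `d(x,y) = m {z ∈ X : x ≤ z ≤ y or y ≤ z ≤ x}`. -/
def pdist (m : Measure ℝ) (X : Set ℝ) (x y : ℝ) : ℝ≥0∞ :=
  m {z | z ∈ X ∧ ((x ≤ z ∧ z ≤ y) ∨ (y ≤ z ∧ z ≤ x))}

/-- Ball for the pseudo-distance `d`. -/
def dBall (m : Measure ℝ) (X : Set ℝ) (x : ℝ) (ε : ℝ) : Set ℝ :=
  {y | y ∈ X ∧ pdist m X x y < ENNReal.ofReal ε}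

/-- `osc(h, ε, x)`: essential supremum of `|h(y) - h(y')|` over `y, y' ∈ B_d(x,ε)`. -/
def oscK (m : Measure ℝ) [SFinite m] (X : Set ℝ) (h : ℝ → ℂ) (ε : ℝ) (x : ℝ) : ℝ≥0∞ :=
  essSup (fun p : ℝ × ℝ => ENNReal.ofReal ‖h p.1 - h p.2‖)
    ((m.prod m).restrict (dBall m X x ε ×ˢ dBall m X x ε))

/-- `osc₁(h,ε) = ∫_X osc(h,ε,x) dm(x)`. -/
def osc1K (m : Measure ℝ) [SFinite m] (X : Set ℝ) (h : ℝ → ℂ) (ε : ℝ) : ℝ≥0∞ :=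
  ∫⁻ x in X, oscK m X h ε x ∂m

/-- Keller seminorm `|h|_{α,1} = sup_{ε ∈ (0,A]} osc₁(h,ε)/ε^α`. -/
def kellerSemi (A α : ℝ) (m : Measure ℝ) [SFinite m] (X : Set ℝ) (h : ℝ → ℂ) : ℝ≥0∞ :=
  ⨆ ε ∈ Ioc (0:ℝ) A, osc1K m X h ε / ENNReal.ofReal (ε ^ α)

/-- Keller norm `‖h‖_{α,1} = ‖h‖_{L¹(m)} + |h|_{α,1}`. -/
def kellerNorm (A α : ℝ) (m : Measure ℝ) [SFinite m] (X : Set ℝ) (h : ℝ → ℂ) : ℝ≥0∞ :=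
  (∫⁻ x in X, ENNReal.ofReal ‖h x‖ ∂m) + kellerSemi A α m X h

/-- Membership in the Keller space `H^{α,1}(m)`. -/
def MemKeller (A α : ℝ) (m : Measure ℝ) [SFinite m] (X : Set ℝ) (h : ℝ → ℂ) : Prop :=
  kellerNorm A α m X h ≠ ⊤

/-- `p`-variation `Var_p(h)` of `h` on `X`. -/
def varP (p : ℝ) (X : Set ℝ) (h : ℝ → ℂ) : ℝ≥0∞ :=
  ⨆ (k : ℕ) (x : Fin (k + 1) → ℝ) (_ : StrictMono x) (_ : ∀ i, x i ∈ X),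
    ENNReal.ofReal ((∑ i : Fin k, ‖h (x i.succ) - h (x i.castSucc)‖ ^ p) ^ (1 / p))

/-- `BV_p`-norm `‖h‖_{BV_p} = Var_p(h) + ‖h‖_∞`. -/
def bvNorm (p : ℝ) (X : Set ℝ) (h : ℝ → ℂ) : ℝ≥0∞ :=
  varP p X h + ⨆ x ∈ X, ENNReal.ofReal ‖h x‖

/-- Sup-norm of a complex function on `X`. -/
def supNormOn (X : Set ℝ) (ψ : ℝ → ℂ) : ℝ := sSup ((fun x => ‖ψ x‖) '' X)

/-- Hölder seminorm `|ψ|_α` of a complex function on `X`. -/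
def holderSemiOn (α : ℝ) (X : Set ℝ) (ψ : ℝ → ℂ) : ℝ :=
  sSup ((fun p : ℝ × ℝ => ‖ψ p.1 - ψ p.2‖ / |p.1 - p.2| ^ α) ''
    {p : ℝ × ℝ | p.1 ∈ X ∧ p.2 ∈ X ∧ p.1 ≠ p.2})

/-- Hölder norm `‖ψ‖_α = ‖ψ‖_∞ + |ψ|_α` on `X`. -/
def holderNormOn (α : ℝ) (X : Set ℝ) (ψ : ℝ → ℂ) : ℝ :=
  supNormOn X ψ + holderSemiOn α X ψ

/-- `x` is a turning point of `f : I → I` : `f` is not locally injective at `x`. -/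
def IsTurningPoint (f : ℝ → ℝ) (I : Set ℝ) (x : ℝ) : Prop :=
  x ∈ I ∧ ∀ ε > 0, ¬ InjOn f (Metric.ball x ε ∩ I)

/-! Take `b n = exp (∑_{m<n} δ m)` for a null sequence `δ`. Then `b n / b (n+1) = exp (-δ n) → 1`,
and by Cesàro `log b n = o(n)`, so `b` does not disturb convergence for `s > c`. Choosing
`δ = 1/(k+1)` on blocks `[N k, N (k+1))`, where `N (k+1) ≥ 2 N k` is an index with
`c n - a n ≤ n / (2(k+1))`, the partial sum of `δ` up to `N (k+1)` exceeds `c n - a n`, so for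
`s ≤ c` infinitely many terms of the series are `≥ 1`. -/

section Blocks

variable {N : ℕ → ℕ} {k m : ℕ}

def blockIndex (N : ℕ → ℕ) (m : ℕ) : ℕ := sInf {k | m < N (k + 1)}

lemma blockIndex_le (h : m < N (k + 1)) : blockIndex N m ≤ k := Nat.sInf_le h

lemma le_blockIndex (hN : StrictMono N) (h : N k ≤ m) : k ≤ blockIndex N m := by
  by_contra! hlt
  have hmem : blockIndex N m ∈ {k | m < N (k + 1)} :=
    Nat.sInf_mem ⟨m, hN.le_apply.trans_lt (hN (Nat.lt_succ_self m))⟩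
  exact (hmem.trans_le (hN.monotone hlt) |>.trans_le h).false

lemma tendsto_blockIndex (hN : StrictMono N) : Tendsto (blockIndex N) atTop atTop :=
  tendsto_atTop_atTop.2 fun k => ⟨N k, fun _ => le_blockIndex hN⟩

lemma sub_div_le_sum_inv_blockIndex (h : N k ≤ N (k + 1)) :
    ((N (k + 1) : ℝ) - N k) / (k + 1) ≤
      ∑ m ∈ Finset.range (N (k + 1)), 1 / ((blockIndex N m : ℝ) + 1) := by
  have hterm : ∀ m ∈ Finset.Ico (N k) (N (k + 1)), 1 / ((k : ℝ) + 1) ≤ 1 / (blockIndex N m + 1) :=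
    fun m hm => by
      gcongr
      exact_mod_cast blockIndex_le (Finset.mem_Ico.1 hm).2
  calc ((N (k + 1) : ℝ) - N k) / (k + 1)
      = (Finset.Ico (N k) (N (k + 1))).card • (1 / ((k : ℝ) + 1)) := by
        rw [Nat.card_Ico, nsmul_eq_mul, Nat.cast_sub h]; ring
    _ ≤ ∑ m ∈ Finset.Ico (N k) (N (k + 1)), 1 / ((blockIndex N m : ℝ) + 1) :=
        Finset.card_nsmul_le_sum _ _ _ hterm
    _ ≤ ∑ m ∈ Finset.range (N (k + 1)), 1 / ((blockIndex N m : ℝ) + 1) :=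
        Finset.sum_le_sum_of_subset_of_nonneg
          (fun m hm => Finset.mem_range.2 (Finset.mem_Ico.1 hm).2) fun _ _ _ => by positivity

end Blocks

theorem exists_tendsto_zero_frequently_le_sum_range {u : ℕ → ℝ}
    (hu : ∀ ε > 0, ∃ᶠ n in atTop, u n ≤ ε * n) :
    ∃ δ : ℕ → ℝ, Tendsto δ atTop (𝓝 0) ∧ ∃ᶠ n in atTop, u n ≤ ∑ m ∈ Finset.range n, δ m := by
  have hchoice : ∀ k m : ℕ, ∃ n ≥ m, u n ≤ 1 / (2 * ((k : ℝ) + 1)) * n := fun k =>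
    frequently_atTop.1 (hu _ (by positivity))
  choose g hg_ge hg_le using hchoice
  obtain ⟨N, hN_rec⟩ : ∃ N : ℕ → ℕ, ∀ k, N (k + 1) = g k (2 * N k + 1) :=
    ⟨fun k => Nat.rec 0 (fun k Nk => g k (2 * Nk + 1)) k, fun _ => rfl⟩
  have hN_succ (k : ℕ) : 2 * N k + 1 ≤ N (k + 1) := hN_rec k ▸ hg_ge k _
  have hN : StrictMono N := strictMono_nat_of_lt_succ fun k => by have := hN_succ k; omega
  refine ⟨fun m => 1 / ((blockIndex N m : ℝ) + 1),
    tendsto_one_div_add_atTop_nhds_zero_nat.comp (tendsto_blockIndex hN),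
    frequently_atTop.2 fun k => ⟨N (k + 1), (Nat.le_succ k).trans hN.le_apply, ?_⟩⟩
  have hdouble : 2 * (N k : ℝ) ≤ N (k + 1) := by
    have := hN_succ k
    exact_mod_cast (by omega : 2 * N k ≤ N (k + 1))
  calc u (N (k + 1)) ≤ 1 / (2 * ((k : ℝ) + 1)) * N (k + 1) := hN_rec k ▸ hg_le k _
    _ = (N (k + 1) : ℝ) / 2 / (k + 1) := by rw [one_div_mul_eq_div, div_div]
    _ ≤ ((N (k + 1) : ℝ) - N k) / (k + 1) := by gcongr; linarith
    _ ≤ _ := sub_div_le_sum_inv_blockIndex (hN.monotone (Nat.le_succ k))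

section Limsup

variable {a : ℕ → ℝ} {c ε : ℝ}

lemma eventually_le_mul_of_limsup_div_eq
    (hc : limsup (fun n : ℕ => ((a n / n : ℝ) : EReal)) atTop = c) (hε : 0 < ε) :
    ∀ᶠ n : ℕ in atTop, a n ≤ (c + ε) * n := by
  have hlt : limsup (fun n : ℕ => ((a n / n : ℝ) : EReal)) atTop < ((c + ε : ℝ) : EReal) := by
    rw [hc]; exact_mod_cast lt_add_of_pos_right c hε
  filter_upwards [eventually_lt_of_limsup_lt hlt, eventually_gt_atTop 0] with n hn hn0
  exact (div_le_iff₀ (Nat.cast_pos.2 hn0)).1 (EReal.coe_lt_coe_iff.1 hn).le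

lemma frequently_mul_sub_le_of_limsup_div_eq
    (hc : limsup (fun n : ℕ => ((a n / n : ℝ) : EReal)) atTop = c) (hε : 0 < ε) :
    ∃ᶠ n : ℕ in atTop, c * n - a n ≤ ε * n := by
  have hlt : ((c - ε : ℝ) : EReal) < limsup (fun n : ℕ => ((a n / n : ℝ) : EReal)) atTop := by
    rw [hc]; exact_mod_cast sub_lt_self c hε
  refine ((frequently_lt_of_lt_limsup (by isBoundedDefault) hlt).and_eventually
    (eventually_gt_atTop 0)).mono fun n ⟨hn, hn0⟩ => ?_
  have := (lt_div_iff₀ (Nat.cast_pos.2 hn0)).1 (EReal.coe_lt_coe_iff.1 hn)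
  linarith [sub_mul c ε (n : ℝ)]

end Limsup

lemma eventually_sum_range_le_mul {δ : ℕ → ℝ} (hδ : Tendsto δ atTop (𝓝 0)) {ε : ℝ}
    (hε : 0 < ε) : ∀ᶠ n : ℕ in atTop, ∑ m ∈ Finset.range n, δ m ≤ ε * n := by
  filter_upwards [hδ.cesaro.eventually (gt_mem_nhds hε), eventually_gt_atTop 0] with n hn hn0
  rw [inv_mul_eq_div, div_lt_iff₀ (Nat.cast_pos.2 hn0)] at hn
  exact hn.le

lemma summable_exp_of_eventually_le_neg_mul {f : ℕ → ℝ} {ε : ℝ} (hε : 0 < ε)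
    (h : ∀ᶠ n in atTop, f n ≤ -ε * n) : Summable fun n => Real.exp (f n) := by
  refine .of_norm_bounded_eventually_nat (g := fun n => Real.exp (-ε) ^ n)
    (summable_geometric_of_lt_one (Real.exp_pos _).le (Real.exp_lt_one_iff.2 (neg_lt_zero.2 hε)))
    (h.mono fun n hn => ?_)
  rw [Real.norm_eq_abs, abs_of_pos (Real.exp_pos _), ← Real.exp_nat_mul, mul_comm]
  exact Real.exp_le_exp.2 hn

lemma not_summable_exp_of_frequently_nonneg {f : ℕ → ℝ} (h : ∃ᶠ n in atTop, 0 ≤ f n) :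
    ¬ Summable fun n => Real.exp (f n) := fun hsum =>
  have hsmall := hsum.tendsto_atTop_zero.eventually (gt_mem_nhds one_pos)
  let ⟨_, hn, hn1⟩ := (h.and_eventually hsmall).exists
  (Real.one_le_exp hn).not_gt hn1

/-- Patterson's lemma on the transition parameter. -/
theorem statement11 (a : ℕ → ℝ) (c : ℝ)
    (hc : Filter.limsup (fun n : ℕ => ((a n / n : ℝ) : EReal)) atTop = (c : EReal)) :
    ∃ b : ℕ → ℝ, (∀ n, 0 < b n) ∧
      Tendsto (fun n : ℕ => b n / b (n + 1)) atTop (𝓝 1) ∧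
      (∀ s : ℝ, c < s → Summable (fun n : ℕ => b n * Real.exp (a n - n * s))) ∧
      (∀ s : ℝ, s ≤ c → ¬ Summable (fun n : ℕ => b n * Real.exp (a n - n * s))) := by
  obtain ⟨δ, hδ, hδ_freq⟩ := exists_tendsto_zero_frequently_le_sum_range
    fun ε hε => frequently_mul_sub_le_of_limsup_div_eq hc hε
  set β : ℕ → ℝ := fun n => ∑ m ∈ Finset.range n, δ m
  have hexp (s : ℝ) (n : ℕ) : Real.exp (β n) * Real.exp (a n - n * s) =
      Real.exp (β n + a n - n * s) := by rw [← Real.exp_add, add_sub_assoc]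
  refine ⟨fun n => Real.exp (β n), fun n => Real.exp_pos _, ?_, fun s hs => ?_, fun s hs => ?_⟩
  · have hratio (n : ℕ) : Real.exp (β n) / Real.exp (β (n + 1)) = Real.exp (-δ n) := by
      rw [← Real.exp_sub, show β (n + 1) = β n + δ n from Finset.sum_range_succ _ _,
        sub_add_cancel_left]
    simpa only [hratio, Function.comp_def, neg_zero, Real.exp_zero] using
      (Real.continuous_exp.tendsto _).comp hδ.neg
  · simp only [hexp]
    refine summable_exp_of_eventually_le_neg_mul (ε := (s - c) / 3) (by linarith) ?_
    filter_upwards [eventually_sum_range_le_mul hδ (ε := (s - c) / 3) (by linarith),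
      eventually_le_mul_of_limsup_div_eq hc (ε := (s - c) / 3) (by linarith)] with n hβ ha
    linear_combination hβ + ha
  · simp only [hexp]
    refine not_summable_exp_of_frequently_nonneg (hδ_freq.mono fun n hn => ?_)
    linarith [mul_le_mul_of_nonneg_left hs (Nat.cast_nonneg (α := ℝ) n)]
end
end

section
/- Fix A > 0, let X be a compact subset of ℝ, let m be an atom-free Borel probability measure on X, and let α ∈ (0,1]. Then the Keller space H^{α,1}(m), equipped with the norm ‖·‖_{α,1}, is a Banach space (i.e. it is complete). -/
/-!
A Riesz–Fischer argument. The L¹(m|_X) part of the Keller norm makes a Cauchy sequence Cauchy in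
L¹, so a subsequence `h ∘ φ` converges m-a.e. on X to some measurable `g`. Both parts of the norm
are lower semicontinuous under a.e. convergence on X: the L¹ part by Fatou, the seminorm because
an essential supremum is, followed by Fatou for `osc₁`. The latter needs `x ↦ osc(h, ε, x)` to be
measurable, which holds because `essSup ≤ c` is a null-set condition on `B_d(x, ε)²`. Hence
`‖h p - g‖ ≤ liminf ‖h p - h (φ k)‖` is small for large `p`, and `g = h p - (h p - g)`.
-/

open MeasureTheory Filter Set Topology ENNReal NNReal

noncomputable section

theorem ENNReal.le_liminf_add (u v : ℕ → ℝ≥0∞) :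
    liminf u atTop + liminf v atTop ≤ liminf (fun k => u k + v k) atTop := by
  simp only [liminf_eq_iSup_iInf_of_nat]
  exact ENNReal.iSup_add_iSup_le fun i j => le_iSup_of_le (max i j) <| le_iInf₂ fun k hk =>
    add_le_add (iInf₂_le k ((le_max_left i j).trans hk)) (iInf₂_le k ((le_max_right i j).trans hk))

section EssSup

variable {α β : Type*} [MeasurableSpace α] [MeasurableSpace β]

theorem essSup_le_iff_measure_lt_eq_zero {μ : Measure α} {F : α → ℝ≥0∞} {c : ℝ≥0∞} :
    essSup F μ ≤ c ↔ μ {p | c < F p} = 0 :=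
  ⟨fun h => measure_mono_null (fun _ hp => h.trans_lt hp) (meas_essSup_lt (μ := μ) (f := F)),
    fun h => essSup_le_of_ae_le c (ae_iff.mpr (by simpa only [not_le] using h))⟩

theorem measurable_essSup_restrict {ν : Measure β} [SFinite ν] {F : β → ℝ≥0∞}
    (hF : Measurable F) {S : α → Set β} (hS : MeasurableSet {q : α × β | q.2 ∈ S q.1}) :
    Measurable fun x => essSup F (ν.restrict (S x)) := by
  refine measurable_of_Iic fun c => ?_
  have hmeas : Measurable fun x => ν (Prod.mk x ⁻¹' {q : α × β | q.2 ∈ S q.1 ∧ c < F q.2}) :=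
    measurable_measure_prodMk_left (hS.inter (measurable_snd (hF measurableSet_Ioi)))
  convert hmeas (measurableSet_singleton 0) using 1
  ext x
  simp only [mem_preimage, mem_Iic, mem_singleton_iff, essSup_le_iff_measure_lt_eq_zero]
  rw [Measure.restrict_apply (measurableSet_lt measurable_const hF), inter_comm]
  rfl

theorem essSup_le_liminf_essSup {μ : Measure α} {F : α → ℝ≥0∞} {G : ℕ → α → ℝ≥0∞}
    (h : ∀ᵐ p ∂μ, F p ≤ liminf (fun k => G k p) atTop) :
    essSup F μ ≤ liminf (fun k => essSup (G k) μ) atTop := by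
  refine essSup_le_of_ae_le _ ?_
  filter_upwards [h, ae_all_iff.mpr fun k => ENNReal.ae_le_essSup (G k)] with p hp hG
  exact hp.trans (liminf_le_liminf (Eventually.of_forall hG))

end EssSup

section KellerNorm

variable {m : Measure ℝ} {X : Set ℝ}

theorem dBall_subset (x ε : ℝ) : dBall m X x ε ⊆ X := fun _ hy => hy.1

theorem measurable_pdist [SFinite m] (hX : MeasurableSet X) :
    Measurable fun q : ℝ × ℝ => pdist m X q.1 q.2 := by
  exact measurable_measure_prodMk_left ((measurable_snd hX).inter
    (((measurableSet_le measurable_fst.fst measurable_snd).inter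
      (measurableSet_le measurable_snd measurable_fst.snd)).union
    ((measurableSet_le measurable_fst.snd measurable_snd).inter
      (measurableSet_le measurable_snd measurable_fst.fst))))

theorem measurableSet_mem_dBall [SFinite m] (hX : MeasurableSet X) (ε : ℝ) :
    MeasurableSet {q : ℝ × ℝ | q.2 ∈ dBall m X q.1 ε} :=
  (measurable_snd hX).inter (measurableSet_lt (measurable_pdist hX) measurable_const)

theorem measurable_oscK [SFinite m] (hX : MeasurableSet X) {ψ : ℝ → ℂ} (hψ : Measurable ψ)
    (ε : ℝ) : Measurable (oscK m X ψ ε) :=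
  measurable_essSup_restrict
    ((hψ.comp measurable_fst).sub (hψ.comp measurable_snd)).norm.ennreal_ofReal
    (((measurable_fst.prodMk measurable_snd.fst) (measurableSet_mem_dBall hX ε)).inter
      ((measurable_fst.prodMk measurable_snd.snd) (measurableSet_mem_dBall hX ε)))

theorem kellerNorm_eq_eLpNorm_add (A α : ℝ) [SFinite m] (ψ : ℝ → ℂ) :
    kellerNorm A α m X ψ = eLpNorm ψ 1 (m.restrict X) + kellerSemi A α m X ψ := by
  simp only [kellerNorm, eLpNorm_one_eq_lintegral_enorm, ofReal_norm]

theorem eLpNorm_le_kellerNorm (A α : ℝ) [SFinite m] (ψ : ℝ → ℂ) :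
    eLpNorm ψ 1 (m.restrict X) ≤ kellerNorm A α m X ψ := by
  rw [kellerNorm_eq_eLpNorm_add]
  exact le_self_add

theorem oscK_sub_le [SFinite m] (f g : ℝ → ℂ) (ε x : ℝ) :
    oscK m X (fun y => f y - g y) ε x ≤ oscK m X f ε x + oscK m X g ε x := by
  refine essSup_le_of_ae_le _ ?_
  filter_upwards [ENNReal.ae_le_essSup (fun p : ℝ × ℝ => ENNReal.ofReal ‖f p.1 - f p.2‖),
    ENNReal.ae_le_essSup (fun p : ℝ × ℝ => ENNReal.ofReal ‖g p.1 - g p.2‖)] with p hf hg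
  calc ENNReal.ofReal ‖(f p.1 - g p.1) - (f p.2 - g p.2)‖
      ≤ ENNReal.ofReal (‖f p.1 - f p.2‖ + ‖g p.1 - g p.2‖) := by
        rw [sub_sub_sub_comm]
        exact ENNReal.ofReal_le_ofReal (norm_sub_le _ _)
    _ ≤ ENNReal.ofReal ‖f p.1 - f p.2‖ + ENNReal.ofReal ‖g p.1 - g p.2‖ := ENNReal.ofReal_add_le
    _ ≤ _ := add_le_add hf hg

theorem kellerSemi_sub_le [SFinite m] (hX : MeasurableSet X) (A α : ℝ) {f : ℝ → ℂ}
    (hf : Measurable f) (g : ℝ → ℂ) :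
    kellerSemi A α m X (fun y => f y - g y) ≤ kellerSemi A α m X f + kellerSemi A α m X g := by
  refine iSup₂_le fun ε hε => ?_
  have hosc1 : osc1K m X (fun y => f y - g y) ε ≤ osc1K m X f ε + osc1K m X g ε :=
    (lintegral_mono fun x => oscK_sub_le f g ε x).trans_eq
      (lintegral_add_left (measurable_oscK hX hf ε) _)
  calc osc1K m X (fun y => f y - g y) ε / ENNReal.ofReal (ε ^ α)
      ≤ osc1K m X f ε / ENNReal.ofReal (ε ^ α) + osc1K m X g ε / ENNReal.ofReal (ε ^ α) :=
        (ENNReal.div_le_div_right hosc1 _).trans_eq ENNReal.add_div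
    _ ≤ kellerSemi A α m X f + kellerSemi A α m X g :=
        add_le_add (le_iSup₂_of_le ε hε le_rfl) (le_iSup₂_of_le ε hε le_rfl)

theorem kellerNorm_sub_le [SFinite m] (hX : MeasurableSet X) (A α : ℝ) {f g : ℝ → ℂ}
    (hf : Measurable f) (hg : Measurable g) :
    kellerNorm A α m X (fun y => f y - g y) ≤ kellerNorm A α m X f + kellerNorm A α m X g := by
  simp only [kellerNorm_eq_eLpNorm_add]
  calc eLpNorm (fun y => f y - g y) 1 (m.restrict X) + kellerSemi A α m X (fun y => f y - g y)
      ≤ (eLpNorm f 1 (m.restrict X) + eLpNorm g 1 (m.restrict X))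
          + (kellerSemi A α m X f + kellerSemi A α m X g) :=
        add_le_add (eLpNorm_sub_le hf.aestronglyMeasurable hg.aestronglyMeasurable le_rfl)
          (kellerSemi_sub_le hX A α hf g)
    _ = _ := add_add_add_comm _ _ _ _

theorem oscK_le_liminf [SFinite m] {ψ : ℝ → ℂ} {u : ℕ → ℝ → ℂ}
    (hu : ∀ᵐ x ∂m.restrict X, Tendsto (fun k => u k x) atTop (𝓝 (ψ x))) (ε x : ℝ) :
    oscK m X ψ ε x ≤ liminf (fun k => oscK m X (u k) ε x) atTop := by
  refine essSup_le_liminf_essSup ?_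
  have hpair : ∀ᵐ p ∂(m.prod m).restrict (X ×ˢ X),
      Tendsto (fun k => u k p.1 - u k p.2) atTop (𝓝 (ψ p.1 - ψ p.2)) := by
    rw [← Measure.prod_restrict]
    filter_upwards [Measure.quasiMeasurePreserving_fst.ae hu,
      Measure.quasiMeasurePreserving_snd.ae hu] with p h1 h2
    exact h1.sub h2
  filter_upwards [ae_restrict_of_ae_restrict_of_subset
    (prod_mono (dBall_subset x ε) (dBall_subset x ε)) hpair] with p hp
  exact (ENNReal.tendsto_ofReal hp.norm).liminf_eq.ge

theorem kellerSemi_le_liminf [SFinite m] (hX : MeasurableSet X) (A α : ℝ) {ψ : ℝ → ℂ}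
    {u : ℕ → ℝ → ℂ} (hu_meas : ∀ k, Measurable (u k))
    (hu : ∀ᵐ x ∂m.restrict X, Tendsto (fun k => u k x) atTop (𝓝 (ψ x))) :
    kellerSemi A α m X ψ ≤ liminf (fun k => kellerSemi A α m X (u k)) atTop := by
  refine iSup₂_le fun ε hε => ?_
  have hc : (ENNReal.ofReal (ε ^ α))⁻¹ ≠ ⊤ :=
    ENNReal.inv_ne_top.mpr (ENNReal.ofReal_pos.mpr (Real.rpow_pos_of_pos hε.1 α)).ne'
  have hosc1 : osc1K m X ψ ε ≤ liminf (fun k => osc1K m X (u k) ε) atTop :=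
    (lintegral_mono fun x => oscK_le_liminf hu ε x).trans
      (lintegral_liminf_le fun k => measurable_oscK hX (hu_meas k) ε)
  calc osc1K m X ψ ε / ENNReal.ofReal (ε ^ α)
      ≤ liminf (fun k => osc1K m X (u k) ε) atTop / ENNReal.ofReal (ε ^ α) :=
        ENNReal.div_le_div_right hosc1 _
    _ = liminf (fun k => osc1K m X (u k) ε / ENNReal.ofReal (ε ^ α)) atTop := by
        simp only [div_eq_mul_inv]
        rw [ENNReal.liminf_mul_const_of_ne_top hc, mul_comm]
    _ ≤ liminf (fun k => kellerSemi A α m X (u k)) atTop :=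
        liminf_le_liminf (Eventually.of_forall fun k => le_iSup₂_of_le ε hε le_rfl)

theorem kellerNorm_le_liminf [SFinite m] (hX : MeasurableSet X) (A α : ℝ) {ψ : ℝ → ℂ}
    {u : ℕ → ℝ → ℂ} (hu_meas : ∀ k, Measurable (u k))
    (hu : ∀ᵐ x ∂m.restrict X, Tendsto (fun k => u k x) atTop (𝓝 (ψ x))) :
    kellerNorm A α m X ψ ≤ liminf (fun k => kellerNorm A α m X (u k)) atTop := by
  simp only [kellerNorm_eq_eLpNorm_add]
  exact (add_le_add
    (Lp.eLpNorm_lim_le_liminf_eLpNorm (fun k => (hu_meas k).aestronglyMeasurable) ψ hu)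
    (kellerSemi_le_liminf hX A α hu_meas hu)).trans (ENNReal.le_liminf_add _ _)

end KellerNorm

theorem statement12_general (A : ℝ) (X : Set ℝ) (hX : IsCompact X)
    (m : Measure ℝ) [IsProbabilityMeasure m]
    (α : ℝ)
    (h : ℕ → ℝ → ℂ) (hmeas : ∀ n, Measurable (h n))
    (hmem : ∀ n, MemKeller A α m X (h n))
    (hcauchy : ∀ δ : ℝ, 0 < δ → ∃ N : ℕ, ∀ p : ℕ, N ≤ p → ∀ q : ℕ, N ≤ q →
      kellerNorm A α m X (fun x => h p x - h q x) < ENNReal.ofReal δ) :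
    ∃ g : ℝ → ℂ, Measurable g ∧ MemKeller A α m X g ∧
      Tendsto (fun n : ℕ => kellerNorm A α m X (fun x => h n x - g x)) atTop (𝓝 0) := by
  have hXm := hX.measurableSet
  choose N hN using fun k : ℕ => hcauchy ((1 / 2) ^ k) (by positivity)
  obtain ⟨φ, hφ_mono, hφN⟩ := extraction_forall_of_eventually' fun k => ⟨N k, fun j hj => hj⟩
  have hae : ∀ᵐ x ∂m.restrict X, ∃ l, Tendsto (fun k => h (φ k) x) atTop (𝓝 l) := by
    refine Lp.ae_tendsto_of_cauchy_eLpNorm (fun k => (hmeas (φ k)).aestronglyMeasurable) le_rfl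
      (B := fun k => ENNReal.ofReal ((1 / 2) ^ k)) ?_ fun K i j hi hj => ?_
    · rw [← ENNReal.ofReal_tsum_of_nonneg (fun k => by positivity) summable_geometric_two]
      exact ENNReal.ofReal_ne_top
    · exact (eLpNorm_le_kellerNorm A α _).trans_lt (hN K _ ((hφN K).trans (hφ_mono.monotone hi))
        _ ((hφN K).trans (hφ_mono.monotone hj)))
  obtain ⟨g, hg_meas, hg⟩ := measurable_limit_of_tendsto_metrizable_ae
    (fun k => (hmeas (φ k)).aemeasurable) hae
  have hclose : ∀ δ > 0, ∃ M, ∀ p ≥ M, kellerNorm A α m X (fun x => h p x - g x) ≤ .ofReal δ := by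
    intro δ hδ
    obtain ⟨M, hM⟩ := hcauchy δ hδ
    refine ⟨M, fun p hp => (kellerNorm_le_liminf hXm A α (fun k => (hmeas p).sub (hmeas (φ k)))
      (hg.mono fun x hx => tendsto_const_nhds.sub hx)).trans (liminf_le_of_frequently_le' ?_)⟩
    exact (eventually_ge_atTop M).frequently.mono fun k hk =>
      (hM p hp (φ k) (hk.trans hφ_mono.le_apply)).le
  refine ⟨g, hg_meas, ?_, ?_⟩
  · obtain ⟨M, hM⟩ := hclose 1 one_pos
    have hg_eq : g = fun x => h M x - (h M x - g x) :=
      funext fun x => (_root_.sub_sub_cancel _ _).symm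
    rw [MemKeller, hg_eq]
    exact ne_top_of_le_ne_top (ENNReal.add_ne_top.mpr ⟨hmem M, ne_top_of_le_ne_top
      ENNReal.ofReal_ne_top (hM M le_rfl)⟩)
      (kellerNorm_sub_le hXm A α (hmeas M) ((hmeas M).sub hg_meas))
  · refine ENNReal.tendsto_atTop_zero.mpr fun ε hε => ?_
    obtain ⟨δ, -, hδ, hδε⟩ := ENNReal.lt_iff_exists_real_btwn.mp hε
    obtain ⟨M, hM⟩ := hclose δ (ENNReal.ofReal_pos.mp hδ)
    exact ⟨M, fun p hp => (hM p hp).trans hδε.le⟩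

/-- the Keller space is a Banach space (completeness). -/
theorem statement12 (A : ℝ) (hA : 0 < A) (X : Set ℝ) (hX : IsCompact X)
    (m : Measure ℝ) [IsProbabilityMeasure m] (hmX : m X = 1) (hatom : ∀ x, m {x} = 0)
    (α : ℝ) (hα : α ∈ Ioc (0:ℝ) 1)
    (h : ℕ → ℝ → ℂ) (hmeas : ∀ n, Measurable (h n))
    (hmem : ∀ n, MemKeller A α m X (h n))
    (hcauchy : ∀ δ : ℝ, 0 < δ → ∃ N : ℕ, ∀ p : ℕ, N ≤ p → ∀ q : ℕ, N ≤ q →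
      kellerNorm A α m X (fun x => h p x - h q x) < ENNReal.ofReal δ) :
    ∃ g : ℝ → ℂ, Measurable g ∧ MemKeller A α m X g ∧
      Tendsto (fun n : ℕ => kellerNorm A α m X (fun x => h n x - g x)) atTop (𝓝 0) :=
  statement12_general A X hX m α h hmeas hmem hcauchy
end
end

section
/- Fix A > 0, let X be a compact subset of ℝ, let m be an atom-free Borel probability measure on X, and let α ∈ (0,1]. Then there is a constant C* > 0 such that every element h of the Keller space H^{α,1}(m) is essentially bounded and satisfies ‖h‖_{L^∞(m)} ≤ C* ‖h‖_{α,1}. -/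
open MeasureTheory Filter Set Topology ENNReal NNReal

noncomputable section

/-! Let `F` be the distribution function of `m` and `ε = min A 1`. As `m` has no atoms, `F` is
continuous and `d(x, y) ≤ |F x - F y|`, so each window `W_c = X ∩ F⁻¹[c - ε/4, c + ε/4]`,
`c ∈ [0, 1]`, has measure at least `ε/8` and lies in the `d`-ball of radius `ε` around each of
its points. Averaging `|h y| ≤ |h y - h z| + |h z|` over `z ∈ W_c` bounds `|h|` a.e. on `W_c` by
`osc(h, ε, x) + ‖h‖₁ / m(W_c)` for any `x ∈ W_c`, and some `x ∈ W_c` has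
`osc(h, ε, x) ≲ osc₁(h, ε) / m(W_c) ≤ |h|_{α,1} / m(W_c)`. The windows with rational `c`
cover `X`. -/

open ProbabilityTheory

section Cdf

variable {m : Measure ℝ} [IsProbabilityMeasure m] [NullSingletonClass m]

lemma continuous_cdf : Continuous (cdf m) := by
  refine continuous_iff_continuousAt.2 fun a => ?_
  rw [(monotone_cdf m).continuousAt_iff_leftLim_eq_rightLim, StieltjesFunction.rightLim_eq]
  have h := (cdf m).measure_singleton a
  rw [measure_cdf, measure_singleton, eq_comm, ENNReal.ofReal_eq_zero, sub_nonpos] at h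
  exact le_antisymm ((monotone_cdf m).leftLim_le le_rfl) h

lemma exists_cdf_eq {u : ℝ} (hu : u ∈ Ioo 0 1) : ∃ a, cdf m a = u :=
  mem_range_of_exists_le_of_exists_ge continuous_cdf
    ((tendsto_cdf_atBot m).eventually (eventually_le_nhds hu.1)).exists
    ((tendsto_cdf_atTop m).eventually (eventually_ge_nhds hu.2)).exists

lemma measure_Icc_eq_ofReal_cdf_sub (a b : ℝ) :
    m (Icc a b) = ENNReal.ofReal (cdf m b - cdf m a) := by
  rw [← measure_congr (Ioc_ae_eq_Icc (μ := m)), ← (cdf m).measure_Ioc, measure_cdf]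

lemma ofReal_sub_le_measure_cdf_preimage_Icc {u v : ℝ} (hu : 0 < u) (hv : v < 1) :
    ENNReal.ofReal (v - u) ≤ m (cdf m ⁻¹' Icc u v) := by
  rcases lt_or_ge v u with hvu | huv
  · simp [ENNReal.ofReal_of_nonpos (sub_nonpos.2 hvu.le)]
  obtain ⟨a, rfl⟩ := exists_cdf_eq (m := m) ⟨hu, huv.trans_lt hv⟩
  obtain ⟨b, rfl⟩ := exists_cdf_eq (m := m) ⟨hu.trans_le huv, hv⟩
  calc ENNReal.ofReal (cdf m b - cdf m a) = m (Ioc a b) := by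
        rw [← (cdf m).measure_Ioc, measure_cdf]
    _ ≤ m (cdf m ⁻¹' Icc (cdf m a) (cdf m b)) :=
        measure_mono fun y hy => ⟨monotone_cdf m hy.1.le, monotone_cdf m hy.2⟩

lemma ofReal_half_le_measure_cdf_preimage_closedBall {c r : ℝ} (hc : c ∈ Icc 0 1)
    (hr : 0 < r) (hr' : r ≤ 1 / 2) :
    ENNReal.ofReal (r / 2) ≤ m (cdf m ⁻¹' Metric.closedBall c r) := by
  obtain ⟨u, hu, hv, hlen, hsub⟩ : ∃ u, 0 < u ∧ u + r / 2 < 1 ∧ (u + r / 2) - u = r / 2 ∧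
      Icc u (u + r / 2) ⊆ Metric.closedBall c r := by
    rw [Real.closedBall_eq_Icc]
    rcases le_total c (1 / 2) with hc2 | hc2
    · exact ⟨c + r / 4, by linarith [hc.1], by linarith, by ring,
        Icc_subset_Icc (by linarith) (by linarith)⟩
    · exact ⟨c - 3 * r / 4, by linarith, by linarith [hc.2], by ring,
        Icc_subset_Icc (by linarith) (by linarith)⟩
  rw [← hlen]
  exact (ofReal_sub_le_measure_cdf_preimage_Icc hu hv).trans (measure_mono (preimage_mono hsub))

lemma pdist_le_ofReal_abs_cdf_sub (X : Set ℝ) (x y : ℝ) :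
    pdist m X x y ≤ ENNReal.ofReal |cdf m x - cdf m y| := by
  have hsub : {z | z ∈ X ∧ (x ≤ z ∧ z ≤ y ∨ y ≤ z ∧ z ≤ x)} ⊆ uIcc x y := by
    rintro z ⟨-, ⟨h1, h2⟩ | ⟨h1, h2⟩⟩
    exacts [Icc_subset_uIcc ⟨h1, h2⟩, Icc_subset_uIcc' ⟨h1, h2⟩]
  refine (measure_mono hsub).trans_eq ?_
  rcases le_total x y with hxy | hyx
  · rw [uIcc_of_le hxy, measure_Icc_eq_ofReal_cdf_sub, abs_sub_comm,
      abs_of_nonneg (sub_nonneg.2 (monotone_cdf m hxy))]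
  · rw [uIcc_of_ge hyx, measure_Icc_eq_ofReal_cdf_sub,
      abs_of_nonneg (sub_nonneg.2 (monotone_cdf m hyx))]

lemma inter_cdf_preimage_closedBall_subset_dBall {X : Set ℝ} {c δ ε x : ℝ} (hδε : 2 * δ < ε)
    (hx : x ∈ X ∩ cdf m ⁻¹' Metric.closedBall c δ) :
    X ∩ cdf m ⁻¹' Metric.closedBall c δ ⊆ dBall m X x ε := by
  rintro y ⟨hyX, hy⟩
  refine ⟨hyX, (pdist_le_ofReal_abs_cdf_sub X x y).trans_lt
    (ENNReal.ofReal_lt_ofReal_iff'.2 ⟨?_, ?_⟩)⟩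
  · calc |cdf m x - cdf m y| = dist (cdf m x) (cdf m y) := (Real.dist_eq _ _).symm
      _ ≤ dist (cdf m x) c + dist (cdf m y) c := dist_triangle_right _ _ _
      _ ≤ δ + δ := add_le_add hx.2 hy
      _ < ε := by linarith
  · linarith [dist_nonneg.trans (Metric.mem_closedBall.1 hy)]

end Cdf

lemma exists_rat_mem_Icc_dist_le {t δ : ℝ} (ht : t ∈ Icc 0 1) (hδ : 0 < δ) :
    ∃ q : ℚ, (q : ℝ) ∈ Icc 0 1 ∧ dist t q ≤ δ := by
  have hlt : max (t - δ) 0 < min (t + δ) 1 :=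
    max_lt (lt_min (by linarith) (by linarith [ht.2])) (lt_min (by linarith [ht.1]) one_pos)
  obtain ⟨q, hq₁, hq₂⟩ := exists_rat_btwn hlt
  rw [max_lt_iff] at hq₁
  rw [lt_min_iff] at hq₂
  refine ⟨q, ⟨hq₁.2.le, hq₂.2.le⟩, ?_⟩
  rw [Real.dist_eq, abs_sub_le_iff]
  constructor <;> linarith

-- `f` need not be measurable (`oscK` is not known to be), hence the slack `κ`.
lemma exists_mem_le_setLIntegral_div_add {Ω : Type*} [MeasurableSpace Ω] {μ : Measure Ω}
    {s : Set Ω} (f : Ω → ℝ≥0∞) (hs : MeasurableSet s) (hs0 : μ s ≠ 0) (hs_top : μ s ≠ ∞)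
    {κ : ℝ≥0∞} (hκ : κ ≠ 0) : ∃ x ∈ s, f x ≤ (∫⁻ x in s, f x ∂μ) / μ s + κ := by
  by_contra! hlt
  set I := ∫⁻ x in s, f x ∂μ
  have hI : I ≠ ∞ := by
    intro hI
    obtain ⟨x, hx⟩ := nonempty_of_measure_ne_zero hs0
    simpa [hI, ENNReal.top_div_of_ne_top hs_top] using hlt x hx
  have hle : I + κ * μ s ≤ I :=
    calc I + κ * μ s = ∫⁻ _ in s, (I / μ s + κ) ∂μ := by
          rw [setLIntegral_const, add_mul, ENNReal.div_mul_cancel hs0 hs_top]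
      _ ≤ I := setLIntegral_mono' hs fun x hx => (hlt x hx).le
  exact (ENNReal.lt_add_right hI (mul_ne_zero hκ hs0)).not_ge hle

section Keller

variable {m : Measure ℝ} [SFinite m] {X : Set ℝ} (h : ℝ → ℂ)

lemma osc1K_le_ofReal_rpow_mul_kellerSemi {A α ε : ℝ} (hε : ε ∈ Ioc 0 A) :
    osc1K m X h ε ≤ ENNReal.ofReal (ε ^ α) * kellerSemi A α m X h := by
  have hle : osc1K m X h ε / ENNReal.ofReal (ε ^ α) ≤ kellerSemi A α m X h :=
    le_iSup₂ (f := fun ε (_ : ε ∈ Ioc (0 : ℝ) A) => osc1K m X h ε / ENNReal.ofReal (ε ^ α)) ε hε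
  rwa [ENNReal.div_le_iff (ENNReal.ofReal_pos.2 (Real.rpow_pos_of_pos hε.1 α)).ne'
    ENNReal.ofReal_ne_top, mul_comm] at hle

lemma ae_measure_mul_ofReal_norm_le {E : Set ℝ} {x ε : ℝ} (hE : E ⊆ dBall m X x ε) :
    ∀ᵐ y ∂m.restrict E, m E * ENNReal.ofReal ‖h y‖ ≤
      m E * oscK m X h ε x + ∫⁻ z in E, ENNReal.ofReal ‖h z‖ ∂m := by
  have hpairs : ∀ᵐ p ∂(m.restrict E).prod (m.restrict E),
      ENNReal.ofReal ‖h p.1 - h p.2‖ ≤ oscK m X h ε x := by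
    rw [Measure.prod_restrict]
    exact ae_mono (Measure.restrict_mono (prod_mono hE hE) le_rfl) (ENNReal.ae_le_essSup _)
  filter_upwards [Measure.ae_ae_of_ae_prod hpairs] with y hy
  calc m E * ENNReal.ofReal ‖h y‖ = ∫⁻ _ in E, ENNReal.ofReal ‖h y‖ ∂m := by
        rw [setLIntegral_const, mul_comm]
    _ ≤ ∫⁻ z in E, (oscK m X h ε x + ENNReal.ofReal ‖h z‖) ∂m := by
        refine lintegral_mono_ae (hy.mono fun z hz => ?_)
        calc ENNReal.ofReal ‖h y‖ ≤ ENNReal.ofReal (‖h y - h z‖ + ‖h z‖) :=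
              ENNReal.ofReal_le_ofReal (norm_le_norm_sub_add _ _)
          _ ≤ oscK m X h ε x + ENNReal.ofReal ‖h z‖ := by
              rw [ENNReal.ofReal_add (norm_nonneg _) (norm_nonneg _)]
              gcongr
    _ = m E * oscK m X h ε x + ∫⁻ z in E, ENNReal.ofReal ‖h z‖ ∂m := by
        rw [lintegral_add_left measurable_const, setLIntegral_const, mul_comm]

lemma ae_ofReal_norm_le_of_forall_subset_dBall {E : Set ℝ} {ε : ℝ} (hE : MeasurableSet E)
    (hE_ball : ∀ x ∈ E, E ⊆ dBall m X x ε) (hE0 : m E ≠ 0) (hE_top : m E ≠ ∞)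
    {κ : ℝ≥0∞} (hκ : κ ≠ 0) :
    ∀ᵐ y ∂m.restrict E, ENNReal.ofReal ‖h y‖ ≤
      ((∫⁻ z in X, ENNReal.ofReal ‖h z‖ ∂m) + osc1K m X h ε) / m E + κ := by
  obtain ⟨x, hxE, hx⟩ := exists_mem_le_setLIntegral_div_add (oscK m X h ε) hE hE0 hE_top hκ
  have hEX : E ⊆ X := (hE_ball x hxE).trans fun _ hy => hy.1
  have hmono : ∀ f : ℝ → ℝ≥0∞, ∫⁻ z in E, f z ∂m ≤ ∫⁻ z in X, f z ∂m := fun f =>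
    lintegral_mono' (Measure.restrict_mono hEX le_rfl) le_rfl
  filter_upwards [ae_measure_mul_ofReal_norm_le h (hE_ball x hxE)] with y hy
  calc ENNReal.ofReal ‖h y‖
      ≤ (m E * oscK m X h ε x + ∫⁻ z in E, ENNReal.ofReal ‖h z‖ ∂m) / m E := by
        rwa [ENNReal.le_div_iff_mul_le (Or.inl hE0) (Or.inl hE_top), mul_comm]
    _ = oscK m X h ε x + (∫⁻ z in E, ENNReal.ofReal ‖h z‖ ∂m) / m E := by
        rw [ENNReal.add_div, mul_comm, ENNReal.mul_div_cancel_right hE0 hE_top]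
    _ ≤ (∫⁻ z in E, oscK m X h ε z ∂m) / m E + κ +
          (∫⁻ z in E, ENNReal.ofReal ‖h z‖ ∂m) / m E := by gcongr
    _ = ((∫⁻ z in E, ENNReal.ofReal ‖h z‖ ∂m) + ∫⁻ z in E, oscK m X h ε z ∂m) / m E + κ := by
        rw [ENNReal.add_div]; abel
    _ ≤ ((∫⁻ z in X, ENNReal.ofReal ‖h z‖ ∂m) + osc1K m X h ε) / m E + κ := by
        gcongr
        exact hmono _

end Keller

lemma ae_ofReal_norm_le_on_cdf_window {m : Measure ℝ} [IsProbabilityMeasure m]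
    [NullSingletonClass m] {X : Set ℝ} (h : ℝ → ℂ) (hX : MeasurableSet X) (hmX : m X = 1)
    {ε c : ℝ} (hε : 0 < ε) (hε1 : ε ≤ 1) (hc : c ∈ Icc 0 1) {κ : ℝ≥0∞} (hκ : κ ≠ 0) :
    ∀ᵐ y ∂m, y ∈ X ∩ cdf m ⁻¹' Metric.closedBall c (ε / 4) → ENNReal.ofReal ‖h y‖ ≤
      ENNReal.ofReal (8 / ε) * ((∫⁻ z in X, ENNReal.ofReal ‖h z‖ ∂m) + osc1K m X h ε) + κ := by
  set E := X ∩ cdf m ⁻¹' Metric.closedBall c (ε / 4)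
  have hE : MeasurableSet E :=
    hX.inter ((monotone_cdf m).measurable Metric.isClosed_closedBall.measurableSet)
  have hmE : ENNReal.ofReal (ε / 8) ≤ m E := by
    rw [show E = _ ∩ X from inter_comm _ _,
      measure_inter_conull ((prob_compl_eq_zero_iff hX).2 hmX)]
    convert ofReal_half_le_measure_cdf_preimage_closedBall (m := m) (r := ε / 4) hc
      (by positivity) (by linarith) using 2
    ring
  have hE0 : m E ≠ 0 := ((ENNReal.ofReal_pos.2 (by positivity)).trans_le hmE).ne'
  rw [← ae_restrict_iff' hE]
  have hE_ball : ∀ x ∈ E, E ⊆ dBall m X x ε := fun x hx =>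
    inter_cdf_preimage_closedBall_subset_dBall (by linarith : 2 * (ε / 4) < ε) hx
  refine (ae_ofReal_norm_le_of_forall_subset_dBall h hE hE_ball hE0 (measure_ne_top _ _)
    hκ).mono fun y hy => hy.trans ?_
  gcongr
  calc _ ≤ ((∫⁻ z in X, ENNReal.ofReal ‖h z‖ ∂m) + osc1K m X h ε) / ENNReal.ofReal (ε / 8) :=
        ENNReal.div_le_div_left hmE _
    _ = _ := by
        rw [ENNReal.div_eq_inv_mul, ← ENNReal.ofReal_inv_of_pos (by positivity), inv_div]

/-- elements of the Keller space are essentially bounded. -/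
theorem statement14 (A : ℝ) (hA : 0 < A) (X : Set ℝ) (hX : IsCompact X)
    (m : Measure ℝ) [IsProbabilityMeasure m] (hmX : m X = 1) (hatom : ∀ x, m {x} = 0)
    (α : ℝ) (hα : α ∈ Ioc (0:ℝ) 1) :
    ∃ C : ℝ, 0 < C ∧ ∀ h : ℝ → ℂ, MemKeller A α m X h →
      essSup (fun x => ENNReal.ofReal ‖h x‖) (m.restrict X) ≤
        ENNReal.ofReal C * kellerNorm A α m X h := by
  have : NullSingletonClass m := ⟨hatom⟩
  set ε := min A 1
  have hε : 0 < ε := lt_min hA one_pos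
  have hXm : MeasurableSet X := hX.measurableSet
  refine ⟨8 / ε, by positivity, fun h _ => ENNReal.le_of_forall_pos_le_add fun κ hκ _ => ?_⟩
  have hosc : osc1K m X h ε ≤ kellerSemi A α m X h :=
    (osc1K_le_ofReal_rpow_mul_kellerSemi h ⟨hε, min_le_left _ _⟩).trans <| mul_le_of_le_one_left'
      (ENNReal.ofReal_le_one.2 (Real.rpow_le_one hε.le (min_le_right _ _) hα.1.le))
  have hwindows : ∀ q : ℚ, ∀ᵐ y ∂m, (q : ℝ) ∈ Icc 0 1 →
      y ∈ X ∩ cdf m ⁻¹' Metric.closedBall (q : ℝ) (ε / 4) →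
      ENNReal.ofReal ‖h y‖ ≤ ENNReal.ofReal (8 / ε) * kellerNorm A α m X h + κ := by
    intro q
    by_cases hq : (q : ℝ) ∈ Icc 0 1
    · filter_upwards [ae_ofReal_norm_le_on_cdf_window h hXm hmX hε (min_le_right _ _) hq
        (ENNReal.coe_ne_zero.2 hκ.ne')] with y hy _ hyE
      exact (hy hyE).trans (by unfold kellerNorm; gcongr)
    · exact ae_of_all _ fun _ hq' => absurd hq' hq
  refine essSup_le_of_ae_le _ ((ae_restrict_iff' hXm).2 ?_)
  filter_upwards [ae_all_iff.2 hwindows] with y hy hyX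
  obtain ⟨q, hq, hdist⟩ :=
    exists_rat_mem_Icc_dist_le ⟨cdf_nonneg m y, cdf_le_one m y⟩ (by positivity : 0 < ε / 4)
  exact hy q hq ⟨hyX, hdist⟩
end
end

section
/- Let X be a compact subset of ℝ and m an atom-free Borel probability measure on X. Then for all p ≥ 1, every function h : X → ℂ, and every ε > 0, one has ∫_X osc(h,ε,x)^p dm(x) ≤ 2ε · Var_p(h)^p. -/
open MeasureTheory Filter Set Topology ENNReal NNReal

noncomputable section

/-!
Since `m` has no atoms, its distribution function `F = cdf m` is continuous, satisfies
`m (F ⁻¹' (a, b]) ≤ b - a`, and turns the pseudo-distance into `d(x, y) = |F y - F x|`.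
Cut the range of `F` into cells of length `η = 2ε/n`. On the cell `F ⁻¹' (jη - η, jη]` the
oscillation is bounded by the oscillation of `h` on the window `F ⁻¹' (jη - η - ε, jη + ε)`,
and windows whose indices differ by more than `n` are ordered along `X`; so along each residue
class mod `n + 1` the `p`-th powers of the window oscillations add up to at most `Var_p(h)^p`.
This bounds the integral by `(2ε + 2ε/n) Var_p(h)^p`, and `n → ∞` finishes.
-/

namespace ProbabilityTheory

section CDF

variable {μ : Measure ℝ} [IsProbabilityMeasure μ] [NullSingletonClass μ]

lemma continuous_cdf : Continuous (cdf μ) := by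
  refine continuous_iff_continuousAt.2 fun x => ?_
  rw [(monotone_cdf μ).continuousAt_iff_leftLim_eq_rightLim, (cdf μ).rightLim_eq]
  have hx := (cdf μ).measure_singleton x
  rw [measure_cdf, measure_singleton, eq_comm, ENNReal.ofReal_eq_zero, sub_nonpos] at hx
  exact le_antisymm ((monotone_cdf μ).leftLim_le le_rfl) hx

lemma measure_cdf_preimage_Iic (b : ℝ) : μ (cdf μ ⁻¹' Iic b) = ENNReal.ofReal (min b 1) := by
  rcases le_or_gt 1 b with hb1 | hb1
  · rw [min_eq_right hb1, ENNReal.ofReal_one, ← measure_univ (μ := μ)]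
    exact congrArg μ (eq_univ_of_forall fun t => (cdf_le_one μ t).trans hb1)
  set S := cdf μ ⁻¹' Iic b
  have hbdd : BddAbove S := by
    obtain ⟨t₀, ht₀⟩ := ((tendsto_cdf_atTop μ).eventually (lt_mem_nhds hb1)).exists_forall_of_atTop
    exact ⟨t₀, fun t (ht : cdf μ t ≤ b) => le_of_not_gt fun h => (ht₀ t h.le).not_ge ht⟩
  rcases S.eq_empty_or_nonempty with hS | hS
  · rw [hS, measure_empty, eq_comm, ENNReal.ofReal_eq_zero, min_le_iff]
    refine Or.inl (le_of_not_gt fun hb0 => ?_)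
    obtain ⟨t, ht⟩ := ((tendsto_cdf_atBot μ).eventually (gt_mem_nhds hb0)).exists
    exact (hS ▸ ht.le : t ∈ (∅ : Set ℝ))
  set c := sSup S
  have hcS : c ∈ S := (isClosed_Iic.preimage continuous_cdf).csSup_mem hS hbdd
  have hSc : S = Iic c :=
    Subset.antisymm (fun t ht => le_csSup hbdd ht) fun t ht => (monotone_cdf μ ht).trans hcS
  have hFc : cdf μ c = b := by
    refine le_antisymm hcS (ge_of_tendsto (continuous_cdf.continuousWithinAt (s := Ioi c))
      (eventually_nhdsWithin_of_forall fun t (ht : c < t) => ?_))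
    exact le_of_not_ge fun h => ht.not_ge (le_csSup hbdd h)
  rw [hSc, ← ofReal_cdf, hFc, min_eq_left hb1.le]

lemma measure_cdf_preimage_Ioc_le (a b : ℝ) :
    μ (cdf μ ⁻¹' Ioc a b) ≤ ENNReal.ofReal (b - a) := by
  rcases le_or_gt b a with hba | hab
  · simp [Ioc_eq_empty_of_le hba]
  rw [← Iic_sdiff_Iic, preimage_sdiff, measure_sdiff (preimage_mono (Iic_subset_Iic.2 hab.le))
    ((measurableSet_Iic.preimage (monotone_cdf μ).measurable).nullMeasurableSet)
    (measure_ne_top _ _), measure_cdf_preimage_Iic, measure_cdf_preimage_Iic, tsub_le_iff_right]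
  calc ENNReal.ofReal (min b 1) ≤ ENNReal.ofReal (b - a + min a 1) :=
        ENNReal.ofReal_le_ofReal <| by
          rcases le_total a 1 with h | h
          · linarith [min_eq_left h, min_le_left b 1]
          · linarith [min_eq_right h, min_le_right b 1]
    _ ≤ ENNReal.ofReal (b - a) + ENNReal.ofReal (min a 1) := ENNReal.ofReal_add_le

lemma pdist_eq_ofReal_abs_cdf_sub {X : Set ℝ} (hX : μ Xᶜ = 0) (x y : ℝ) :
    pdist μ X x y = ENNReal.ofReal |cdf μ y - cdf μ x| := by
  have hset : {z | z ∈ X ∧ ((x ≤ z ∧ z ≤ y) ∨ (y ≤ z ∧ z ≤ x))} = uIcc x y ∩ X := by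
    ext z; simp only [mem_ofPred_eq, mem_inter_iff, mem_uIcc]; tauto
  have hIoc := (cdf μ).measure_Ioc (min x y) (max x y)
  rw [measure_cdf] at hIoc
  rw [pdist, hset, measure_inter_conull hX, uIcc, ← measure_congr Ioc_ae_eq_Icc, hIoc,
    (monotone_cdf μ).map_max, (monotone_cdf μ).map_min, max_sub_min_eq_abs]

end CDF

end ProbabilityTheory

namespace Keller

open ProbabilityTheory

section Variation

variable (p : ℝ) (h : ℝ → ℂ)

def chainSum : List ℝ → ℝ≥0∞
  | a :: b :: l => ENNReal.ofReal (‖h b - h a‖ ^ p) + chainSum (b :: l)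
  | _ => 0

lemma chainSum_append_le (l₁ l₂ : List ℝ) :
    chainSum p h l₁ + chainSum p h l₂ ≤ chainSum p h (l₁ ++ l₂) := by
  match l₁ with
  | [] => simp [chainSum]
  | [a] =>
    match l₂ with
    | [] => simp [chainSum]
    | b :: l => simp [chainSum]
  | a :: b :: l =>
    simp only [chainSum, List.cons_append, add_assoc]
    gcongr
    exact chainSum_append_le (b :: l) l₂

lemma chainSum_cons_eq_sum (a : ℝ) (l : List ℝ) :
    chainSum p h (a :: l) = ∑ i : Fin l.length,
      ENNReal.ofReal (‖h ((a :: l).get i.succ) - h ((a :: l).get i.castSucc)‖ ^ p) := by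
  induction l generalizing a with
  | nil => simp [chainSum]
  | cons b l ih =>
    rw [chainSum, ih]
    erw [Fin.sum_univ_succ]
    rfl

lemma chainSum_le_varP_rpow (hp : 0 < p) {S : Set ℝ} {l : List ℝ} (hl : l.Pairwise (· < ·))
    (hlS : ∀ x ∈ l, x ∈ S) : chainSum p h l ≤ varP p S h ^ p := by
  obtain _ | ⟨a, l⟩ := l
  · exact zero_le
  set s := ∑ i : Fin l.length, ‖h ((a :: l).get i.succ) - h ((a :: l).get i.castSucc)‖ ^ p
  have hs : 0 ≤ s := Finset.sum_nonneg fun i _ => by positivity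
  have hchain : ENNReal.ofReal (s ^ (1 / p)) ≤ varP p S h :=
    le_iSup_of_le l.length <| le_iSup_of_le (a :: l).get <|
      le_iSup_of_le (List.sortedLT_iff_pairwise.2 hl).strictMono_get <|
      le_iSup_of_le (fun i => hlS _ (List.get_mem _ _)) le_rfl
  calc chainSum p h (a :: l) = ENNReal.ofReal s := by
        rw [chainSum_cons_eq_sum, ENNReal.ofReal_sum_of_nonneg fun i _ => by positivity]
    _ = ENNReal.ofReal (s ^ (1 / p)) ^ p := by
        rw [ENNReal.ofReal_rpow_of_nonneg (by positivity) hp.le, ← Real.rpow_mul hs,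
          one_div_mul_cancel hp.ne', Real.rpow_one]
    _ ≤ varP p S h ^ p := by gcongr

/-- `varP p S h ^ p`, with chains encoded as sorted lists so that chains in consecutive sets
concatenate. -/
def pVarPow (S : Set ℝ) : ℝ≥0∞ :=
  ⨆ l : {l : List ℝ // l.Pairwise (· < ·) ∧ ∀ x ∈ l, x ∈ S}, chainSum p h l

variable {p h}

lemma chainSum_le_pVarPow {S : Set ℝ} {l : List ℝ} (hl : l.Pairwise (· < ·))
    (hlS : ∀ x ∈ l, x ∈ S) : chainSum p h l ≤ pVarPow p h S :=
  le_iSup_of_le ⟨l, hl, hlS⟩ le_rfl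

lemma pVarPow_le_varP_rpow (hp : 0 < p) (S : Set ℝ) : pVarPow p h S ≤ varP p S h ^ p :=
  iSup_le fun l => chainSum_le_varP_rpow p h hp l.2.1 l.2.2

lemma pVarPow_mono {S T : Set ℝ} (hST : S ⊆ T) : pVarPow p h S ≤ pVarPow p h T :=
  iSup_le fun l => chainSum_le_pVarPow l.2.1 fun x hx => hST (l.2.2 x hx)

lemma pVarPow_add_le_union {S T : Set ℝ} (hST : ∀ s ∈ S, ∀ t ∈ T, s < t) :
    pVarPow p h S + pVarPow p h T ≤ pVarPow p h (S ∪ T) := by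
  have {U : Set ℝ} : Nonempty {l : List ℝ // l.Pairwise (· < ·) ∧ ∀ x ∈ l, x ∈ U} :=
    ⟨⟨[], List.Pairwise.nil, by simp⟩⟩
  refine ENNReal.iSup_add_iSup_le fun l₁ l₂ => (chainSum_append_le p h _ _).trans ?_
  refine chainSum_le_pVarPow ?_ ?_
  · exact List.pairwise_append.2
      ⟨l₁.2.1, l₂.2.1, fun s hs t ht => hST s (l₁.2.2 s hs) t (l₂.2.2 t ht)⟩
  · intro x hx
    rcases List.mem_append.1 hx with hx | hx
    exacts [Or.inl (l₁.2.2 x hx), Or.inr (l₂.2.2 x hx)]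

lemma ofReal_norm_sub_rpow_le_pVarPow (hp : 0 < p) {S : Set ℝ} {y y' : ℝ} (hy : y ∈ S)
    (hy' : y' ∈ S) : ENNReal.ofReal (‖h y - h y'‖ ^ p) ≤ pVarPow p h S := by
  rcases lt_trichotomy y y' with hlt | rfl | hlt
  · rw [norm_sub_rev]
    simpa [chainSum] using chainSum_le_pVarPow (p := p) (h := h) (l := [y, y'])
      (by simpa using hlt) (by simp [hy, hy'])
  · simp [Real.zero_rpow hp.ne']
  · simpa [chainSum] using chainSum_le_pVarPow (p := p) (h := h) (l := [y', y])
      (by simpa using hlt) (by simp [hy, hy'])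

def oscPowOn (p : ℝ) (h : ℝ → ℂ) (S : Set ℝ) : ℝ≥0∞ :=
  ⨆ y ∈ S, ⨆ y' ∈ S, ENNReal.ofReal (‖h y - h y'‖ ^ p)

lemma oscPowOn_le_pVarPow (hp : 0 < p) (S : Set ℝ) : oscPowOn p h S ≤ pVarPow p h S :=
  iSup₂_le fun _ hy => iSup₂_le fun _ hy' => ofReal_norm_sub_rpow_le_pVarPow hp hy hy'

lemma sum_oscPowOn_le_pVarPow {ι : Type*} [LinearOrder ι] (hp : 0 < p) (G : ι → Set ℝ)
    (J : Finset ι) (hG : ∀ i ∈ J, ∀ j ∈ J, i < j → ∀ y ∈ G i, ∀ y' ∈ G j, y < y') :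
    ∑ j ∈ J, oscPowOn p h (G j) ≤ pVarPow p h (⋃ j ∈ J, G j) := by
  induction J using Finset.induction_on_max with
  | empty => simp
  | insert a J ha ih =>
    have haJ : a ∉ J := fun h => (ha a h).false
    have hJ : ∀ i ∈ J, ∀ j ∈ J, i < j → ∀ y ∈ G i, ∀ y' ∈ G j, y < y' := fun i hi j hj =>
      hG i (Finset.mem_insert_of_mem hi) j (Finset.mem_insert_of_mem hj)
    have hJa : ∀ y ∈ ⋃ j ∈ J, G j, ∀ y' ∈ G a, y < y' := by
      simp only [mem_iUnion]
      rintro y ⟨i, hi, hy⟩ y' hy'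
      exact hG i (Finset.mem_insert_of_mem hi) a (Finset.mem_insert_self a J) (ha i hi) y hy y' hy'
    calc ∑ j ∈ insert a J, oscPowOn p h (G j)
        = ∑ j ∈ J, oscPowOn p h (G j) + oscPowOn p h (G a) := by
          rw [Finset.sum_insert haJ, add_comm]
      _ ≤ pVarPow p h (⋃ j ∈ J, G j) + pVarPow p h (G a) :=
          add_le_add (ih hJ) (oscPowOn_le_pVarPow hp _)
      _ ≤ pVarPow p h ((⋃ j ∈ J, G j) ∪ G a) := pVarPow_add_le_union hJa
      _ = pVarPow p h (⋃ j ∈ insert a J, G j) := by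
          rw [Finset.set_biUnion_insert, union_comm]

end Variation

lemma tsum_le_mul_of_sum_separated_le (E : ℕ → ℝ≥0∞) {K : ℕ} (hK : 0 < K) {V : ℝ≥0∞}
    (hE : ∀ J : Finset ℕ, (∀ i ∈ J, ∀ j ∈ J, i < j → i + K ≤ j) → ∑ j ∈ J, E j ≤ V) :
    ∑' j, E j ≤ K * V := by
  refine ENNReal.tsum_le_of_sum_range_le fun N => ?_
  rw [← Finset.sum_fiberwise_of_maps_to (g := (· % K)) (t := Finset.range K)
    fun j _ => Finset.mem_range.2 (Nat.mod_lt j hK)]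
  calc ∑ r ∈ Finset.range K, ∑ j ∈ Finset.range N with j % K = r, E j
      ≤ ∑ _r ∈ Finset.range K, V := by
        refine Finset.sum_le_sum fun r _ => hE _ fun i hi j hj hij => ?_
        have hmod : i % K = j % K :=
          (Finset.mem_filter.1 hi).2.trans (Finset.mem_filter.1 hj).2.symm
        have := Nat.le_of_dvd (Nat.sub_pos_of_lt hij) ((Nat.modEq_iff_dvd' hij.le).1 hmod)
        omega
    _ = K * V := by rw [Finset.sum_const, Finset.card_range, nsmul_eq_mul]

section Oscillation

variable {m : Measure ℝ} {X : Set ℝ} {h : ℝ → ℂ} {ε p : ℝ}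

lemma dBall_subset_cdf_preimage [IsProbabilityMeasure m] [NullSingletonClass m]
    (hX : m Xᶜ = 0) {x a b : ℝ} (hx : cdf m x ∈ Ioc a b) :
    dBall m X x ε ⊆ X ∩ cdf m ⁻¹' Ioo (a - ε) (b + ε) := by
  rintro y ⟨hyX, hy⟩
  rw [pdist_eq_ofReal_abs_cdf_sub hX, ENNReal.ofReal_lt_ofReal_iff'] at hy
  have hxy := abs_lt.1 hy.1
  exact ⟨hyX, by linarith [hx.1, hxy.1], by linarith [hx.2, hxy.2]⟩

lemma oscK_rpow_le_oscPowOn [SFinite m] (hp : 0 < p) {x : ℝ} {S : Set ℝ} (hS : MeasurableSet S)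
    (hxS : dBall m X x ε ⊆ S) : oscK m X h ε x ^ p ≤ oscPowOn p h S := by
  rw [← ENNReal.le_rpow_inv_iff hp]
  refine (essSup_mono_measure' (Measure.restrict_mono (prod_mono hxS hxS) le_rfl)).trans
    (essSup_le_of_ae_le _ ?_)
  filter_upwards [ae_restrict_mem (hS.prod hS)] with z hz
  rw [ENNReal.le_rpow_inv_iff hp, ENNReal.ofReal_rpow_of_nonneg (norm_nonneg _) hp.le]
  exact le_iSup₂_of_le z.1 hz.1 (le_iSup₂_of_le z.2 hz.2 le_rfl)

variable [IsProbabilityMeasure m] [NullSingletonClass m]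

lemma setLIntegral_cdf_preimage_Ioc_oscK_rpow_le (hp : 0 < p) (hXm : MeasurableSet X)
    (hX : m Xᶜ = 0) (a b : ℝ) :
    ∫⁻ x in cdf m ⁻¹' Ioc a b, oscK m X h ε x ^ p ∂m
      ≤ ENNReal.ofReal (b - a) * oscPowOn p h (X ∩ cdf m ⁻¹' Ioo (a - ε) (b + ε)) := by
  set E := oscPowOn p h (X ∩ cdf m ⁻¹' Ioo (a - ε) (b + ε))
  calc ∫⁻ x in cdf m ⁻¹' Ioc a b, oscK m X h ε x ^ p ∂m
      ≤ ∫⁻ _ in cdf m ⁻¹' Ioc a b, E ∂m :=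
        setLIntegral_mono measurable_const fun x hx => oscK_rpow_le_oscPowOn hp
          (hXm.inter (measurableSet_Ioo.preimage (monotone_cdf m).measurable))
          (dBall_subset_cdf_preimage hX hx)
    _ = m (cdf m ⁻¹' Ioc a b) * E := by rw [setLIntegral_const, mul_comm]
    _ ≤ ENNReal.ofReal (b - a) * E := by gcongr; exact measure_cdf_preimage_Ioc_le a b

lemma lintegral_oscK_rpow_le_of_mesh (hp : 0 < p) (hXm : MeasurableSet X) (hX : m Xᶜ = 0)
    (hε : 0 < ε) {n : ℕ} (hn : 0 < n) :
    ∫⁻ x in X, oscK m X h ε x ^ p ∂m ≤ ENNReal.ofReal (2 * ε + 2 * ε / n) * varP p X h ^ p := by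
  set η := 2 * ε / n
  have hη : 0 < η := by positivity
  have hnη : n * η = 2 * ε := mul_div_cancel₀ _ (by positivity)
  set C : ℕ → Set ℝ := fun j => cdf m ⁻¹' Ioc ((j - 1) * η) (j * η)
  set W : ℕ → Set ℝ := fun j => X ∩ cdf m ⁻¹' Ioo ((j - 1) * η - ε) (j * η + ε)
  have hcover : ⋃ j, C j = univ := by
    refine eq_univ_of_forall fun x => mem_iUnion.2 ⟨⌈cdf m x / η⌉₊, ?_, ?_⟩
    · have := Nat.ceil_lt_add_one (div_nonneg (cdf_nonneg m x) hη.le)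
      rw [← lt_div_iff₀ hη]; linarith
    · rw [← div_le_iff₀ hη]; exact Nat.le_ceil _
  have hsep : ∀ i j : ℕ, i + (n + 1) ≤ j → ∀ y ∈ W i, ∀ y' ∈ W j, y < y' := by
    rintro i j hij y ⟨-, -, hy⟩ y' ⟨-, hy', -⟩
    have : (i + n + 1 : ℝ) ≤ j := by exact_mod_cast hij
    have := mul_le_mul_of_nonneg_right this hη.le
    exact (monotone_cdf m).reflect_lt (by linarith)
  calc ∫⁻ x in X, oscK m X h ε x ^ p ∂m
      ≤ ∫⁻ x in ⋃ j, C j, oscK m X h ε x ^ p ∂m := by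
        rw [hcover, Measure.restrict_univ]; exact setLIntegral_le_lintegral _ _
    _ ≤ ∑' j, ∫⁻ x in C j, oscK m X h ε x ^ p ∂m := lintegral_iUnion_le _ _
    _ ≤ ∑' j, ENNReal.ofReal η * oscPowOn p h (W j) := ENNReal.tsum_le_tsum fun j =>
        (setLIntegral_cdf_preimage_Ioc_oscK_rpow_le hp hXm hX _ _).trans_eq <| by
          rw [show (j : ℝ) * η - (j - 1) * η = η by ring]
    _ = ENNReal.ofReal η * ∑' j, oscPowOn p h (W j) := ENNReal.tsum_mul_left
    _ ≤ ENNReal.ofReal η * ((n + 1 : ℕ) * varP p X h ^ p) := by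
        gcongr
        refine tsum_le_mul_of_sum_separated_le _ n.succ_pos fun J hJ => ?_
        refine (sum_oscPowOn_le_pVarPow hp W J fun i hi j hj hij =>
          hsep i j (hJ i hi j hj hij)).trans ?_
        exact (pVarPow_mono (iUnion₂_subset fun j _ => inter_subset_left)).trans
          (pVarPow_le_varP_rpow hp X)
    _ = ENNReal.ofReal (2 * ε + 2 * ε / n) * varP p X h ^ p := by
        rw [← mul_assoc, ← ENNReal.ofReal_natCast, ← ENNReal.ofReal_mul hη.le]
        congr 2
        push_cast
        rw [mul_add, mul_comm η, hnη, mul_one]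

end Oscillation

end Keller

open Keller ProbabilityTheory

/-- oscillation integral bounded by the `p`-variation. -/
theorem statement15 (X : Set ℝ) (hX : IsCompact X)
    (m : Measure ℝ) [IsProbabilityMeasure m] (hmX : m X = 1) (hatom : ∀ x, m {x} = 0)
    (p : ℝ) (hp : 1 ≤ p) (h : ℝ → ℂ) (ε : ℝ) (hε : 0 < ε) :
    ∫⁻ x in X, oscK m X h ε x ^ p ∂m ≤ ENNReal.ofReal (2 * ε) * varP p X h ^ p := by
  have hp0 : 0 < p := by linarith
  have : NullSingletonClass m := ⟨hatom⟩
  have hXm : MeasurableSet X := hX.isClosed.measurableSet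
  have hXc : m Xᶜ = 0 := (prob_compl_eq_zero_iff hXm).2 hmX
  have hlim : Tendsto (fun n : ℕ => ENNReal.ofReal (2 * ε + 2 * ε / n) * varP p X h ^ p) atTop
      (𝓝 (ENNReal.ofReal (2 * ε) * varP p X h ^ p)) := by
    refine ENNReal.Tendsto.mul_const ?_ (Or.inl (ENNReal.ofReal_pos.2 (by positivity)).ne')
    have := ENNReal.tendsto_ofReal
      ((tendsto_const_nhds (x := 2 * ε)).add (tendsto_const_div_atTop_nhds_zero_nat (2 * ε)))
    rwa [add_zero] at this
  exact ge_of_tendsto hlim <| (eventually_gt_atTop 0).mono fun n hn =>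
    lintegral_oscK_rpow_le_of_mesh hp0 hXm hXc hε hn
end
end

section
/- Fix A > 0, let X be a compact subset of ℝ, let m be an atom-free Borel probability measure on X, and let α ∈ (0,1]. Let C* > 0 be a constant such that ‖h‖_{L^∞(m)} ≤ C* ‖h‖_{α,1} for every h in H^{α,1}(m). Then for all h and g in the Keller space H^{α,1}(m), the product h·g belongs to H^{α,1}(m) and ‖h·g‖_{α,1} ≤ 2 C* ‖h‖_{α,1} · ‖g‖_{α,1}. -/
open MeasureTheory Filter Set Topology ENNReal NNReal

noncomputable section

/-! The product estimate comes from the pointwise inequality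
`|hg(y) - hg(y')| ≤ |h(y)| |g(y) - g(y')| + |g(y')| |h(y) - h(y')|`: taking essential suprema over
`d`-balls, integrating and dividing by `ε ^ α` gives
`‖hg‖_{α,1} ≤ ‖h‖_∞ ‖g‖_{α,1} + ‖g‖_∞ ‖h‖_{α,1}`, and `‖·‖_∞ ≤ C* ‖·‖_{α,1}` finishes.
The one delicate point is that the integral of a sum of oscillations splits only if
`x ↦ osc(g, ε, x)` is measurable; it is in fact lower semicontinuous, because `m` has no atoms,
so that `d(x, x') → 0` as `x' → x` and a ball around `x` of slightly smaller radius is contained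
in the ball of radius `ε` around any nearby `x'`. -/

lemma essSup_restrict_le_iSup_of_subset_iUnion {α ι : Type*} [MeasurableSpace α] [Countable ι]
    {μ : Measure α} {f : α → ℝ≥0∞} {s : Set α} {t : ι → Set α} (hst : s ⊆ ⋃ i, t i) :
    essSup f (μ.restrict s) ≤ ⨆ i, essSup f (μ.restrict (t i)) := by
  refine (essSup_mono_measure' (Measure.restrict_mono hst le_rfl)).trans
    (essSup_le_of_ae_le _ ?_)
  rw [EventuallyLE, ae_restrict_iUnion_iff]
  exact fun i => (ENNReal.ae_le_essSup f).mono fun _ hx =>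
    hx.trans (le_iSup (fun i => essSup f (μ.restrict (t i))) i)

lemma ae_restrict_prod_fst {α β : Type*} [MeasurableSpace α] [MeasurableSpace β]
    {μ : Measure α} {ν : Measure β} [SFinite μ] [SFinite ν] {s : Set α} {t : Set β}
    {p : α → Prop} (h : ∀ᵐ x ∂μ.restrict s, p x) :
    ∀ᵐ q ∂(μ.prod ν).restrict (s ×ˢ t), p q.1 := by
  rw [← Measure.prod_restrict]
  exact Measure.quasiMeasurePreserving_fst.ae h

lemma ae_restrict_prod_snd {α β : Type*} [MeasurableSpace α] [MeasurableSpace β]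
    {μ : Measure α} {ν : Measure β} [SFinite μ] [SFinite ν] {s : Set α} {t : Set β}
    {p : β → Prop} (h : ∀ᵐ y ∂ν.restrict t, p y) :
    ∀ᵐ q ∂(μ.prod ν).restrict (s ×ˢ t), p q.2 := by
  rw [← Measure.prod_restrict]
  exact Measure.quasiMeasurePreserving_snd.ae h

lemma ofReal_norm_mul_sub_mul_le {R : Type*} [NonUnitalSeminormedRing R] (a b c d : R) :
    ENNReal.ofReal ‖a * b - c * d‖ ≤
      ENNReal.ofReal ‖a‖ * ENNReal.ofReal ‖b - d‖ +
        ENNReal.ofReal ‖d‖ * ENNReal.ofReal ‖a - c‖ := by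
  rw [← ENNReal.ofReal_mul (norm_nonneg _), ← ENNReal.ofReal_mul (norm_nonneg _),
    ← ENNReal.ofReal_add (by positivity) (by positivity)]
  refine ENNReal.ofReal_le_ofReal ?_
  calc ‖a * b - c * d‖ = ‖a * (b - d) + (a - c) * d‖ := by noncomm_ring
    _ ≤ ‖a‖ * ‖b - d‖ + ‖a - c‖ * ‖d‖ :=
      (norm_add_le _ _).trans (add_le_add (norm_mul_le _ _) (norm_mul_le _ _))
    _ = ‖a‖ * ‖b - d‖ + ‖d‖ * ‖a - c‖ := by ring

def essSupNorm (m : Measure ℝ) (X : Set ℝ) (h : ℝ → ℂ) : ℝ≥0∞ :=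
  essSup (fun x => ENNReal.ofReal ‖h x‖) (m.restrict X)

section Keller

variable {A α : ℝ} {m : Measure ℝ} {X : Set ℝ}

lemma pdist_triangle (x y z : ℝ) : pdist m X x z ≤ pdist m X x y + pdist m X y z := by
  refine (measure_mono ?_).trans (measure_union_le _ _)
  rintro w ⟨hw, hord⟩
  rcases le_total w y with hwy | hyw
  · rcases hord with ⟨h1, _⟩ | ⟨h1, _⟩
    · exact Or.inl ⟨hw, Or.inl ⟨h1, hwy⟩⟩
    · exact Or.inr ⟨hw, Or.inr ⟨h1, hwy⟩⟩
  · rcases hord with ⟨_, h2⟩ | ⟨_, h2⟩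
    · exact Or.inr ⟨hw, Or.inl ⟨hyw, h2⟩⟩
    · exact Or.inl ⟨hw, Or.inr ⟨hyw, h2⟩⟩

lemma pdist_le_measure_Icc {x y δ : ℝ} (hy : |y - x| < δ) :
    pdist m X y x ≤ m (Icc (x - δ) (x + δ)) := by
  rw [abs_sub_lt_iff] at hy
  refine measure_mono ?_
  rintro z ⟨_, ⟨h1, h2⟩ | ⟨h1, h2⟩⟩ <;> constructor <;> linarith

lemma eventually_pdist_lt [IsFiniteMeasure m] [NullSingletonClass m] (x : ℝ) {c : ℝ≥0∞}
    (hc : 0 < c) : ∀ᶠ y in 𝓝 x, pdist m X y x < c := by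
  obtain ⟨δ, hδ, hsmall⟩ :=
    Metric.eventually_nhds_iff.mp ((tendsto_measure_Icc m x).eventually (gt_mem_nhds hc))
  filter_upwards [Metric.ball_mem_nhds x (half_pos hδ)] with y hy
  rw [Metric.mem_ball, Real.dist_eq] at hy
  refine (pdist_le_measure_Icc hy).trans_lt (hsmall ?_)
  rw [Real.dist_eq, sub_zero, abs_of_pos (half_pos hδ)]
  exact half_lt_self hδ

lemma eventually_mem_dBall_sub [IsFiniteMeasure m] {x y ε : ℝ} (hy : y ∈ dBall m X x ε) :
    ∀ᶠ n : ℕ in atTop, y ∈ dBall m X x (ε - 1 / (n + 1)) := by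
  have hlt : (pdist m X x y).toReal < ε :=
    (ENNReal.lt_ofReal_iff_toReal_lt (measure_ne_top _ _)).mp hy.2
  filter_upwards [tendsto_one_div_add_atTop_nhds_zero_nat.eventually
    (gt_mem_nhds (sub_pos.mpr hlt))] with n hn
  refine ⟨hy.1, (ENNReal.lt_ofReal_iff_toReal_lt (measure_ne_top _ _)).mpr ?_⟩
  change (pdist m X x y).toReal < _
  linarith

lemma dBall_prod_subset_iUnion [IsFiniteMeasure m] (x ε : ℝ) :
    dBall m X x ε ×ˢ dBall m X x ε ⊆
      ⋃ n : ℕ, dBall m X x (ε - 1 / (n + 1)) ×ˢ dBall m X x (ε - 1 / (n + 1)) := by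
  rintro ⟨y, y'⟩ ⟨hy, hy'⟩
  obtain ⟨n, hn, hn'⟩ := ((eventually_mem_dBall_sub hy).and (eventually_mem_dBall_sub hy')).exists
  exact mem_iUnion.mpr ⟨n, hn, hn'⟩

lemma dBall_sub_subset_dBall {x x' ε δ : ℝ} (hδ : 0 ≤ δ)
    (hx : pdist m X x' x < ENNReal.ofReal δ) : dBall m X x (ε - δ) ⊆ dBall m X x' ε := by
  rintro y ⟨hyX, hy⟩
  refine ⟨hyX, (pdist_triangle x' x y).trans_lt ?_⟩
  rcases le_or_gt 0 (ε - δ) with hεδ | hεδ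
  · calc pdist m X x' x + pdist m X x y < ENNReal.ofReal δ + ENNReal.ofReal (ε - δ) :=
          ENNReal.add_lt_add hx hy
      _ = ENNReal.ofReal ε := by rw [← ENNReal.ofReal_add hδ hεδ, add_sub_cancel]
  · simp [ENNReal.ofReal_of_nonpos hεδ.le] at hy

lemma lowerSemicontinuous_oscK [IsFiniteMeasure m] [NullSingletonClass m] (h : ℝ → ℂ) (ε : ℝ) :
    LowerSemicontinuous (oscK m X h ε) := by
  intro x c hc
  obtain ⟨n, hn⟩ := lt_iSup_iff.mp
    (hc.trans_le (essSup_restrict_le_iSup_of_subset_iUnion (dBall_prod_subset_iUnion x ε)))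
  have hδ : (0 : ℝ) < 1 / (n + 1) := by positivity
  filter_upwards [eventually_pdist_lt (m := m) (X := X) x (ENNReal.ofReal_pos.mpr hδ)] with x' hx'
  have hsub := dBall_sub_subset_dBall (ε := ε) hδ.le hx'
  exact hn.trans_le (essSup_mono_measure' (Measure.restrict_mono (prod_mono hsub hsub) le_rfl))

lemma measurable_oscK_s17 [IsFiniteMeasure m] [NullSingletonClass m] (h : ℝ → ℂ) (ε : ℝ) :
    Measurable (oscK m X h ε) :=
  (lowerSemicontinuous_oscK h ε).measurable

lemma ae_restrict_dBall_le_essSupNorm [SFinite m] (h : ℝ → ℂ) (x ε : ℝ) :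
    ∀ᵐ y ∂m.restrict (dBall m X x ε), ENNReal.ofReal ‖h y‖ ≤ essSupNorm m X h :=
  ae_restrict_of_ae_restrict_of_subset (fun _ hy => hy.1) (ENNReal.ae_le_essSup _)

lemma oscK_mul_le [SFinite m] (h g : ℝ → ℂ) (ε x : ℝ) :
    oscK m X (fun y => h y * g y) ε x ≤
      essSupNorm m X h * oscK m X g ε x + essSupNorm m X g * oscK m X h ε x := by
  refine essSup_le_of_ae_le _ ?_
  filter_upwards [ae_restrict_prod_fst (ae_restrict_dBall_le_essSupNorm h x ε),
    ae_restrict_prod_snd (ae_restrict_dBall_le_essSupNorm g x ε),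
    ENNReal.ae_le_essSup (fun p : ℝ × ℝ => ENNReal.ofReal ‖g p.1 - g p.2‖),
    ENNReal.ae_le_essSup (fun p : ℝ × ℝ => ENNReal.ofReal ‖h p.1 - h p.2‖)]
    with p hh₁ hg₂ hoscg hosch
  exact (ofReal_norm_mul_sub_mul_le _ _ _ _).trans
    (add_le_add (mul_le_mul' hh₁ hoscg) (mul_le_mul' hg₂ hosch))

lemma osc1K_mul_le [IsFiniteMeasure m] [NullSingletonClass m] (h g : ℝ → ℂ) (ε : ℝ) :
    osc1K m X (fun y => h y * g y) ε ≤
      essSupNorm m X h * osc1K m X g ε + essSupNorm m X g * osc1K m X h ε := by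
  calc osc1K m X (fun y => h y * g y) ε
      ≤ ∫⁻ x in X, essSupNorm m X h * oscK m X g ε x + essSupNorm m X g * oscK m X h ε x ∂m :=
        lintegral_mono fun x => oscK_mul_le h g ε x
    _ = essSupNorm m X h * osc1K m X g ε + essSupNorm m X g * osc1K m X h ε := by
        rw [lintegral_add_left ((measurable_oscK_s17 g ε).const_mul _),
          lintegral_const_mul _ (measurable_oscK_s17 g ε), lintegral_const_mul _ (measurable_oscK_s17 h ε)]
        rfl

lemma kellerSemi_mul_le [IsFiniteMeasure m] [NullSingletonClass m] (h g : ℝ → ℂ) :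
    kellerSemi A α m X (fun y => h y * g y) ≤
      essSupNorm m X h * kellerSemi A α m X g + essSupNorm m X g * kellerSemi A α m X h := by
  refine iSup₂_le fun ε hε => ?_
  calc osc1K m X (fun y => h y * g y) ε / ENNReal.ofReal (ε ^ α)
      ≤ (essSupNorm m X h * osc1K m X g ε + essSupNorm m X g * osc1K m X h ε) /
          ENNReal.ofReal (ε ^ α) :=
        ENNReal.div_le_div_right (osc1K_mul_le h g ε) _
    _ = essSupNorm m X h * (osc1K m X g ε / ENNReal.ofReal (ε ^ α)) +
          essSupNorm m X g * (osc1K m X h ε / ENNReal.ofReal (ε ^ α)) := by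
        rw [ENNReal.add_div, mul_div_assoc, mul_div_assoc]
    _ ≤ essSupNorm m X h * kellerSemi A α m X g + essSupNorm m X g * kellerSemi A α m X h := by
        gcongr
        · exact le_iSup₂ (f := fun ε (_ : ε ∈ Ioc 0 A) =>
            osc1K m X g ε / ENNReal.ofReal (ε ^ α)) ε hε
        · exact le_iSup₂ (f := fun ε (_ : ε ∈ Ioc 0 A) =>
            osc1K m X h ε / ENNReal.ofReal (ε ^ α)) ε hε

lemma lintegral_norm_mul_le (h g : ℝ → ℂ) (hh : essSupNorm m X h ≠ ⊤) :
    ∫⁻ x in X, ENNReal.ofReal ‖h x * g x‖ ∂m ≤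
      essSupNorm m X h * ∫⁻ x in X, ENNReal.ofReal ‖g x‖ ∂m := by
  rw [← lintegral_const_mul' _ _ hh]
  refine lintegral_mono_ae ?_
  filter_upwards [ENNReal.ae_le_essSup fun x => ENNReal.ofReal ‖h x‖] with x hx
  rw [norm_mul, ENNReal.ofReal_mul (norm_nonneg _)]
  exact mul_le_mul_left hx _

lemma kellerNorm_mul_le [IsFiniteMeasure m] [NullSingletonClass m] (h g : ℝ → ℂ)
    (hh : essSupNorm m X h ≠ ⊤) :
    kellerNorm A α m X (fun y => h y * g y) ≤
      essSupNorm m X h * kellerNorm A α m X g + essSupNorm m X g * kellerNorm A α m X h := by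
  calc kellerNorm A α m X (fun y => h y * g y)
      ≤ essSupNorm m X h * (∫⁻ x in X, ENNReal.ofReal ‖g x‖ ∂m) +
          (essSupNorm m X h * kellerSemi A α m X g + essSupNorm m X g * kellerSemi A α m X h) :=
        add_le_add (lintegral_norm_mul_le h g hh) (kellerSemi_mul_le h g)
    _ = essSupNorm m X h * kellerNorm A α m X g + essSupNorm m X g * kellerSemi A α m X h := by
        rw [kellerNorm, mul_add, add_assoc]
    _ ≤ essSupNorm m X h * kellerNorm A α m X g + essSupNorm m X g * kellerNorm A α m X h := by
        gcongr
        exact le_add_self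

end Keller

theorem statement17_general (A : ℝ) (X : Set ℝ)
    (m : Measure ℝ) [IsProbabilityMeasure m] (hatom : ∀ x, m {x} = 0)
    (α : ℝ)
    (Cstar : ℝ)
    (hCs : ∀ h : ℝ → ℂ, MemKeller A α m X h →
      essSup (fun x => ENNReal.ofReal ‖h x‖) (m.restrict X) ≤
        ENNReal.ofReal Cstar * kellerNorm A α m X h)
    (h g : ℝ → ℂ) (hh : MemKeller A α m X h) (hg : MemKeller A α m X g) :
    MemKeller A α m X (fun x => h x * g x) ∧
      kellerNorm A α m X (fun x => h x * g x) ≤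
        ENNReal.ofReal (2 * Cstar) *
          (kellerNorm A α m X h * kellerNorm A α m X g) := by
  have : NullSingletonClass m := ⟨hatom⟩
  have hbound : kellerNorm A α m X (fun x => h x * g x) ≤
      ENNReal.ofReal (2 * Cstar) * (kellerNorm A α m X h * kellerNorm A α m X g) :=
    calc kellerNorm A α m X (fun x => h x * g x)
        ≤ essSupNorm m X h * kellerNorm A α m X g + essSupNorm m X g * kellerNorm A α m X h :=
          kellerNorm_mul_le h g
            (ne_top_of_le_ne_top (ENNReal.mul_ne_top ENNReal.ofReal_ne_top hh) (hCs h hh))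
      _ ≤ ENNReal.ofReal Cstar * kellerNorm A α m X h * kellerNorm A α m X g +
          ENNReal.ofReal Cstar * kellerNorm A α m X g * kellerNorm A α m X h := by
          gcongr
          exacts [hCs h hh, hCs g hg]
      _ = ENNReal.ofReal (2 * Cstar) * (kellerNorm A α m X h * kellerNorm A α m X g) := by
          rw [ENNReal.ofReal_mul zero_le_two, ENNReal.ofReal_ofNat]
          ring
  refine ⟨ne_top_of_le_ne_top ?_ hbound, hbound⟩
  exact ENNReal.mul_ne_top ENNReal.ofReal_ne_top (ENNReal.mul_ne_top hh hg)

/-- the Keller space is a Banach algebra (product estimate). -/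
theorem statement17 (A : ℝ) (hA : 0 < A) (X : Set ℝ) (hX : IsCompact X)
    (m : Measure ℝ) [IsProbabilityMeasure m] (hmX : m X = 1) (hatom : ∀ x, m {x} = 0)
    (α : ℝ) (hα : α ∈ Ioc (0:ℝ) 1)
    (Cstar : ℝ) (hCstar : 0 < Cstar)
    (hCs : ∀ h : ℝ → ℂ, MemKeller A α m X h →
      essSup (fun x => ENNReal.ofReal ‖h x‖) (m.restrict X) ≤
        ENNReal.ofReal Cstar * kellerNorm A α m X h)
    (h g : ℝ → ℂ) (hh : MemKeller A α m X h) (hg : MemKeller A α m X g) :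
    MemKeller A α m X (fun x => h x * g x) ∧
      kellerNorm A α m X (fun x => h x * g x) ≤
        ENNReal.ofReal (2 * Cstar) *
          (kellerNorm A α m X h * kellerNorm A α m X g) :=
  statement17_general A X m hatom α Cstar hCs h g hh hg
end
end
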